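/- arXiv:2104.03377 — 3 statements merged into one kernel-verified Lean document; each statement's English description precedes it below -/
import Mathlib

section
/- Let E be an Archimedean uniformly complete vector lattice with a strong unit. Then every principal prime ideal P of E is a maximal ideal, and moreover P equals the disjoint complement {a}^d of some atom a of E. -/
/-- An (order) ideal of the vector lattice `E`: a solid linear subspace. -/
def IsIdeal {E : Type*} [Lattice E] [AddCommGroup E] [Module ℝ E]
    (I : Submodule ℝ E) : Prop :=
  ∀ x y : E, |x| ≤ |y| → y ∈ I → x ∈ I

/-- A prime ideal: a proper ideal `P` such that `x ⊓ y ∈ P` implies `x ∈ P` or `y ∈ P`. -/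
def IsPrimeIdeal {E : Type*} [Lattice E] [AddCommGroup E] [Module ℝ E]
    (P : Submodule ℝ E) : Prop :=
  IsIdeal P ∧ P ≠ ⊤ ∧ ∀ x y : E, x ⊓ y ∈ P → x ∈ P ∨ y ∈ P

/-- A principal ideal: `I = {y : |y| ≤ c • x for some scalar c ≥ 0}` for some `x ≥ 0`. -/
def IsPrincipalIdeal {E : Type*} [Lattice E] [AddCommGroup E] [Module ℝ E]
    (I : Submodule ℝ E) : Prop :=
  ∃ x : E, 0 ≤ x ∧ ∀ y : E, y ∈ I ↔ ∃ c : ℝ, 0 ≤ c ∧ |y| ≤ c • x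

/-- A maximal ideal: a proper ideal `M` such that any ideal between `M` and `E` equals `M` or `E`. -/
def IsMaximalIdeal {E : Type*} [Lattice E] [AddCommGroup E] [Module ℝ E]
    (M : Submodule ℝ E) : Prop :=
  IsIdeal M ∧ M ≠ ⊤ ∧ ∀ J : Submodule ℝ E, IsIdeal J → M ≤ J → J = M ∨ J = ⊤

/-- An ideal `I` is order dense if its disjoint complement is trivial. -/
def IsOrderDense {E : Type*} [Lattice E] [AddCommGroup E] [Module ℝ E]
    (I : Submodule ℝ E) : Prop :=
  ∀ x : E, (∀ y ∈ I, |x| ⊓ |y| = 0) → x = 0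

/-- `a` is an atom of the vector lattice `E`. -/
def IsAtomElem {E : Type*} [Lattice E] [AddCommGroup E] (a : E) : Prop :=
  0 < a ∧ ∀ x y : E, 0 ≤ x → x ≤ a → 0 ≤ y → y ≤ a → x ⊓ y = 0 → x = 0 ∨ y = 0

/-- The vector lattice `E` is Archimedean. -/
def VLArchimedean (E : Type*) [Lattice E] [AddCommGroup E] : Prop :=
  ∀ x y : E, (∀ n : ℕ, n • x ≤ y) → x ≤ 0

/-- The vector lattice `E` is uniformly complete. -/
def UniformlyComplete (E : Type*) [Lattice E] [AddCommGroup E] [Module ℝ E] : Prop :=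
  ∀ e : E, 0 ≤ e → ∀ x : ℕ → E,
    (∀ ε : ℝ, 0 < ε → ∃ N : ℕ, ∀ m n : ℕ, N ≤ m → N ≤ n → |x m - x n| ≤ ε • e) →
    ∃ l : E, ∀ ε : ℝ, 0 < ε → ∃ N : ℕ, ∀ n : ℕ, N ≤ n → |x n - l| ≤ ε • e

/-- The vector lattice `E` has a strong unit. -/
def HasStrongUnit (E : Type*) [Lattice E] [AddCommGroup E] [Module ℝ E] : Prop :=
  ∃ e : E, 0 ≤ e ∧ ∀ x : E, ∃ c : ℝ, 0 < c ∧ |x| ≤ c • e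

/-- The vector lattice `E` is prime Noetherian: every increasing sequence of
prime ideals is eventually constant. -/
def PrimeNoetherian (E : Type*) [Lattice E] [AddCommGroup E] [Module ℝ E] : Prop :=
  ∀ P : ℕ → Submodule ℝ E, (∀ n, IsPrimeIdeal (P n)) → Monotone P →
    ∃ N : ℕ, ∀ n : ℕ, N ≤ n → P n = P N


set_option linter.unusedSectionVars false
set_option linter.unnecessarySimpa false

section Tools
variable {E : Type*} [Lattice E] [AddCommGroup E] [CovariantClass E E (· + ·) (· ≤ ·)]

/-- a ⊓ (b + c) ≤ a ⊓ b + a ⊓ c for nonnegative elements. -/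
lemma vl_inf_add_le {a b c : E} (ha : 0 ≤ a) (hb : 0 ≤ b) (hc : 0 ≤ c) :
    a ⊓ (b + c) ≤ a ⊓ b + a ⊓ c := by
  set d := a ⊓ (b + c) with hd
  have key : d - a ⊓ b ≤ a ⊓ c := by
    rw [sub_eq_add_neg, neg_inf, add_sup]
    apply sup_le
    · have h0 : d + -a ≤ 0 := by
        rw [← sub_eq_add_neg, sub_nonpos]; exact inf_le_left
      exact h0.trans (le_inf ha hc)
    · rw [← sub_eq_add_neg]
      refine le_inf ?_ ?_
      · rw [sub_le_iff_le_add]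
        exact le_trans inf_le_left (by simpa [add_comm] using (le_add_of_nonneg_left hb : a ≤ b + a))
      · rw [sub_le_iff_le_add, add_comm]
        exact inf_le_right
  have h5 := add_le_add_left key (a ⊓ b)
  rw [sub_add_cancel] at h5
  exact h5.trans (le_of_eq (add_comm _ _))

lemma vl_nsmul_inf_zero {a b : E} (ha : 0 ≤ a) (hb : 0 ≤ b) (h : a ⊓ b = 0) (n : ℕ) :
    a ⊓ (n • b) = 0 := by
  induction n with
  | zero => simpa using inf_eq_right.2 ha
  | succ k ih =>
      have hkb : (0:E) ≤ k • b := nsmul_nonneg hb k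
      refine le_antisymm ?_ (le_inf ha (nsmul_nonneg hb (k+1)))
      calc a ⊓ ((k+1) • b) = a ⊓ (k • b + b) := by rw [succ_nsmul]
        _ ≤ a ⊓ (k • b) + a ⊓ b := vl_inf_add_le ha hkb hb
        _ = 0 := by rw [ih, h, add_zero]

/-- posPart of difference: (a - b)⁺ = a - a ⊓ b -/
lemma vl_posPart_sub (a b : E) : (a - b)⁺ = a - a ⊓ b := by
  have h1 : a ⊓ b + (a ⊔ b) = a + b := inf_add_sup a b
  have h2 : (a - b)⁺ + b = a ⊔ b := by
    rw [posPart_def, sup_add, sub_add_cancel, zero_add]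
  have h3 : a ⊔ b = a + b - a ⊓ b := by rw [← h1]; abel
  rw [h3] at h2
  have h4 : (a - b)⁺ = a + b - a ⊓ b - b := by rw [← h2]; abel
  rw [h4]; abel
lemma vl_inf_add_posPart_sub (a b : E) : a = a ⊓ b + (a - b)⁺ := by
  rw [vl_posPart_sub]; abel

lemma vl_posPart_add_le (a b : E) : (a + b)⁺ ≤ a⁺ + b⁺ := by
  rw [posPart_def]
  exact sup_le (add_le_add (le_posPart a) (le_posPart b))
    (add_nonneg (posPart_nonneg a) (posPart_nonneg b))

lemma vl_add_inf_le {a b c : E} (hc : 0 ≤ c) : (c + a) ⊓ b ≤ c + a ⊓ b := by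
  have : (c + a) ⊓ b ≤ (c + a) ⊓ (c + b) :=
    inf_le_inf_left _ (le_add_of_nonneg_left hc)
  simpa [← add_inf] using this

/-- u⁺ ⊓ v⁺ ≤ (u + v)⁺ -/
lemma vl_posPart_inf_posPart_le (u v : E) : u⁺ ⊓ v⁺ ≤ (u + v)⁺ := by
  have h1 : u⁺ ≤ (u + v)⁺ + (-v)⁺ := by
    have h : u = (u + v) + (-v) := by abel
    calc u⁺ = ((u+v) + (-v))⁺ := by rw [← h]
      _ ≤ (u+v)⁺ + (-v)⁺ := vl_posPart_add_le _ _
  calc u⁺ ⊓ v⁺ ≤ ((u+v)⁺ + (-v)⁺) ⊓ v⁺ := inf_le_inf_right _ h1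
    _ ≤ (u+v)⁺ + ((-v)⁺ ⊓ v⁺) := vl_add_inf_le (posPart_nonneg _)
    _ = (u+v)⁺ := by
        rw [posPart_neg, inf_comm v⁻ v⁺, posPart_inf_negPart_eq_zero, add_zero]

variable [Module ℝ E] [PosSMulMono ℝ E]

lemma vl_smul_le_smul {c d : ℝ} {v : E} (h : c ≤ d) (hv : 0 ≤ v) : c • v ≤ d • v := by
  have h0 : (0:E) ≤ (d - c) • v := smul_nonneg (by linarith) hv
  have h2 : c • v + 0 ≤ c • v + (d - c) • v := add_le_add_right h0 _
  have h3 : c • v + (d - c) • v = d • v := by rw [← add_smul]; ring_nf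
  rw [add_zero] at h2; rwa [h3] at h2

lemma vl_smul_inf_zero {a b : E} (ha : 0 ≤ a) (hb : 0 ≤ b) (h : a ⊓ b = 0) {c : ℝ}
    (hc : 0 ≤ c) : a ⊓ (c • b) = 0 := by
  obtain ⟨n, hn⟩ := exists_nat_ge c
  have h1 : c • b ≤ (n:ℝ) • b := vl_smul_le_smul hn hb
  rw [Nat.cast_smul_eq_nsmul] at h1
  refine le_antisymm ?_ (le_inf ha (smul_nonneg hc hb))
  calc a ⊓ (c • b) ≤ a ⊓ (n • b) := inf_le_inf_left a h1
    _ = 0 := vl_nsmul_inf_zero ha hb h n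

lemma vl_smul_posPart {c : ℝ} (hc : 0 ≤ c) (a : E) : (c • a)⁺ = c • a⁺ := by
  rcases eq_or_lt_of_le hc with h | h
  · simp [← h]
  refine le_antisymm ?_ ?_
  · rw [posPart_def]
    exact sup_le (smul_le_smul_of_nonneg_left (le_posPart a) hc)
      (smul_nonneg hc (posPart_nonneg a))
  · have h1 : a⁺ ≤ c⁻¹ • (c • a)⁺ := by
      rw [posPart_def]
      refine sup_le ?_ ?_
      · have h2 : c • a ≤ (c • a)⁺ := le_posPart _
        have h3 := smul_le_smul_of_nonneg_left h2 (inv_nonneg.2 hc)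
        rwa [inv_smul_smul₀ h.ne'] at h3
      · exact smul_nonneg (inv_nonneg.2 hc) (posPart_nonneg _)
    have h4 := smul_le_smul_of_nonneg_left h1 hc
    rwa [smul_inv_smul₀ h.ne'] at h4

end Tools

section CaseOne
variable {E : Type*} [Lattice E] [AddCommGroup E] [CovariantClass E E (· + ·) (· ≤ ·)]
  [Module ℝ E] [PosSMulMono ℝ E]

/-- scale-`m` annulus piece of `x` relative to `e`. -/
noncomputable def vlB (x e : E) (m : ℕ) : E :=
  (x ⊓ ((3*(1/2)^(m+1) : ℝ) • e) - ((1/2)^(m+1) : ℝ) • e)⁺ ⊓ (((3*(1/2)^(m+1) : ℝ) • e) - x)⁺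

lemma vlB_nonneg (x e : E) (m : ℕ) : 0 ≤ vlB x e m :=
  le_inf (posPart_nonneg _) (posPart_nonneg _)

lemma vl_arch_eps (harch : VLArchimedean E) {t e : E} (he : 0 ≤ e)
    (h : ∀ ε : ℝ, 0 < ε → t ≤ ε • e) : t ≤ 0 := by
  apply harch t e
  intro n
  rcases Nat.eq_zero_or_pos n with h0 | h0
  · simpa [h0] using he
  · have hn : (0:ℝ) < n := by exact_mod_cast h0
    have h1 : t ≤ (1/(n:ℝ)) • e := h _ (by positivity)
    have h2 : (n:ℝ) • t ≤ (n:ℝ) • ((1/(n:ℝ)) • e) :=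
      smul_le_smul_of_nonneg_left h1 (le_of_lt hn)
    rw [smul_smul] at h2
    rw [← Nat.cast_smul_eq_nsmul ℝ n t]
    convert h2 using 2
    field_simp
    rw [one_smul]

/-- from `w ≤ x` and `w ⊓ (x - c•e)⁺ = 0` (with everything nonneg) deduce `w ≤ c•e`. -/
lemma vl_small_of_disj {w x e : E} {c : ℝ} (hc : 0 ≤ c) (hw : 0 ≤ w) (hx : 0 ≤ x)
    (he : 0 ≤ e) (hwx : w ≤ x) (hdisj : w ⊓ (x - c • e)⁺ = 0) : w ≤ c • e := by
  have hxe : (0:E) ≤ x ⊓ (c • e) := le_inf hx (smul_nonneg hc he)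
  have hsplit : x = x ⊓ (c • e) + (x - c • e)⁺ := vl_inf_add_posPart_sub x (c • e)
  have h1 : w = w ⊓ x := (inf_eq_left.2 hwx).symm
  calc w = w ⊓ x := h1
    _ = w ⊓ (x ⊓ (c • e) + (x - c • e)⁺) := by rw [← hsplit]
    _ ≤ w ⊓ (x ⊓ (c • e)) + w ⊓ (x - c • e)⁺ := vl_inf_add_le hw hxe (posPart_nonneg _)
    _ = w ⊓ (x ⊓ (c • e)) := by rw [hdisj, add_zero]
    _ ≤ c • e := inf_le_right.trans inf_le_right

lemma vl_caseI (harch : VLArchimedean E) {x e : E} (hx : 0 ≤ x) (he : 0 ≤ e) (n : ℕ)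
    (hB : ∀ m, n ≤ m → vlB x e m = 0) : (e - (2:ℝ)^(n+1) • x)⁺ ⊓ x = 0 := by
  set M : ℝ := (2:ℝ)^(n+1) with hM
  set a : E := (e - M • x)⁺ with ha
  set w : E := a ⊓ x with hwdef
  have hw0 : 0 ≤ w := le_inf (posPart_nonneg _) hx
  have hwx : w ≤ x := inf_le_right
  have hα : ∀ m : ℕ, (0:ℝ) ≤ (1/2)^(m+1) := fun m => by positivity
  -- base and induction
  have key : ∀ m, n ≤ m → w ⊓ (x - ((1/2)^(m+1) : ℝ) • e)⁺ = 0 := by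
    intro m hm
    induction m, hm using Nat.le_induction with
    | base =>
        -- (x - (1/2)^(n+1) e)⁺ = M⁻¹ • (M•x - e)⁺ and a ⊥ (M•x - e)⁺
        have hMpos : (0:ℝ) < M := by positivity
        have hscal : M • (x - ((1/2)^(n+1) : ℝ) • e) = M • x - e := by
          rw [smul_sub, smul_smul, hM]
          have h9 : (2:ℝ)^(n+1) * (1/2)^(n+1) = 1 := by
            rw [← mul_pow]; norm_num
          rw [h9, one_smul]
        have h2 : (x - ((1/2)^(n+1) : ℝ) • e)⁺ = M⁻¹ • (M • x - e)⁺ := by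
          rw [← hscal, vl_smul_posPart hMpos.le, inv_smul_smul₀ hMpos.ne']
        have hdisj : a ⊓ (M • x - e)⁺ = 0 := by
          have : a = (M • x - e)⁻ := by rw [ha, ← posPart_neg, neg_sub]
          rw [this, inf_comm]
          exact posPart_inf_negPart_eq_zero _
        refine le_antisymm ?_ (le_inf hw0 (posPart_nonneg _))
        rw [h2]
        calc w ⊓ (M⁻¹ • (M • x - e)⁺) ≤ a ⊓ (M⁻¹ • (M • x - e)⁺) :=
              inf_le_inf_right _ inf_le_left
          _ = 0 := vl_smul_inf_zero (posPart_nonneg _) (posPart_nonneg _) hdisj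
                (inv_nonneg.2 hMpos.le)
    | succ m hm ih =>
        set αm : ℝ := (1/2)^(m+1) with hαm
        set αm' : ℝ := (1/2)^(m+2) with hαm'
        set βm' : ℝ := 3*(1/2)^(m+2) with hβm'
        have hαm0 : (0:ℝ) ≤ αm := hα m
        have hαm'0 : (0:ℝ) ≤ αm' := hα (m+1)
        have hβm'0 : (0:ℝ) ≤ βm' := by rw [hβm']; positivity
        set p : E := (x ⊓ (βm' • e) - αm' • e)⁺ with hp
        set q : E := ((βm' • e) - x)⁺ with hq
        have hpq : p ⊓ q = 0 := hB (m+1) (by omega)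
        -- step i : w ≤ αm • e
        have hwsmall : w ≤ αm • e := vl_small_of_disj hαm0 hw0 hx he hwx ih
        -- step ii : r := w ⊓ p = 0
        have hr : w ⊓ p = 0 := by
          set r : E := w ⊓ p with hrdef
          have hr0 : 0 ≤ r := le_inf hw0 (posPart_nonneg _)
          have hrq : r ⊓ q = 0 :=
            le_antisymm ((inf_le_inf_right q inf_le_right).trans hpq.le)
              (le_inf hr0 (posPart_nonneg _))
          have hrv : r ⊓ (x - αm • e)⁺ = 0 :=
            le_antisymm ((inf_le_inf_right _ inf_le_left).trans ih.le)
              (le_inf hr0 (posPart_nonneg _))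
          -- αm • e ≤ 2•q + 2•(x - αm•e)⁺
          have hkey : αm • e ≤ (2:ℝ) • q + (2:ℝ) • (x - αm • e)⁺ := by
            have hsum : (βm' • e - x) + (x - αm • e) = ((βm' - αm)) • e := by
              rw [sub_smul]; abel
            have hβα : βm' - αm = αm/2 := by rw [hβm', hαm]; ring
            have h3 : ((αm/2) • e)⁺ = (αm/2) • e := by
              rw [posPart_def, sup_eq_left.2 (smul_nonneg (by linarith) he)]
            have h4 : (αm/2) • e ≤ q + (x - αm • e)⁺ := by
              calc (αm/2) • e = (((βm' • e - x) + (x - αm • e)))⁺ := by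
                    rw [hsum, hβα, h3]
                _ ≤ q + (x - αm • e)⁺ := vl_posPart_add_le _ _
            calc αm • e = (2:ℝ) • ((αm/2) • e) := by rw [smul_smul]; congr 1; ring
              _ ≤ (2:ℝ) • (q + (x - αm • e)⁺) :=
                  smul_le_smul_of_nonneg_left h4 (by norm_num)
              _ = (2:ℝ) • q + (2:ℝ) • (x - αm • e)⁺ := smul_add _ _ _
          have hrle : r ≤ (2:ℝ) • q + (2:ℝ) • (x - αm • e)⁺ :=
            le_trans (le_trans inf_le_left hwsmall) hkey
          have h2q : (0:E) ≤ (2:ℝ) • q := smul_nonneg (by norm_num) (posPart_nonneg _)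
          have h2v : (0:E) ≤ (2:ℝ) • (x - αm • e)⁺ :=
            smul_nonneg (by norm_num) (posPart_nonneg _)
          refine le_antisymm ?_ hr0
          calc r = r ⊓ ((2:ℝ) • q + (2:ℝ) • (x - αm • e)⁺) := (inf_eq_left.2 hrle).symm
            _ ≤ r ⊓ ((2:ℝ) • q) + r ⊓ ((2:ℝ) • (x - αm • e)⁺) := vl_inf_add_le hr0 h2q h2v
            _ = 0 := by
                rw [vl_smul_inf_zero hr0 (posPart_nonneg _) hrq (by norm_num),
                  vl_smul_inf_zero hr0 (posPart_nonneg _) hrv (by norm_num), add_zero]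
        -- step iii
        have hsplit2 : (x - αm' • e)⁺ ≤ p + (x - βm' • e)⁺ := by
          have hx2 : x - αm' • e = (x ⊓ (βm' • e) - αm' • e) + (x - βm' • e)⁺ := by
            have := vl_inf_add_posPart_sub x (βm' • e)
            calc x - αm' • e = (x ⊓ (βm' • e) + (x - βm' • e)⁺) - αm' • e := by rw [← this]
              _ = (x ⊓ (βm' • e) - αm' • e) + (x - βm' • e)⁺ := by abel
          have h5 : x - αm' • e ≤ p + (x - βm' • e)⁺ := by
            rw [hx2]; exact add_le_add_left (le_posPart _) _
          calc (x - αm' • e)⁺ ≤ (p + (x - βm' • e)⁺)⁺ := posPart_mono h5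
            _ = p + (x - βm' • e)⁺ := by
                rw [posPart_def, sup_eq_left.2 (add_nonneg (posPart_nonneg _) (posPart_nonneg _))]
        have hmono : (x - βm' • e)⁺ ≤ (x - αm • e)⁺ := by
          apply posPart_mono
          have hβeq : βm' = (3/2)*αm := by rw [hβm', hαm, pow_succ]; ring
          have : αm • e ≤ βm' • e := vl_smul_le_smul (by rw [hβeq]; linarith [hα m]) he
          exact sub_le_sub_left this x
        refine le_antisymm ?_ (le_inf hw0 (posPart_nonneg _))
        calc w ⊓ (x - αm' • e)⁺ ≤ w ⊓ (p + (x - βm' • e)⁺) := inf_le_inf_left _ hsplit2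
          _ ≤ w ⊓ p + w ⊓ (x - βm' • e)⁺ :=
              vl_inf_add_le hw0 (posPart_nonneg _) (posPart_nonneg _)
          _ ≤ 0 + w ⊓ (x - αm • e)⁺ := add_le_add hr.le (inf_le_inf_left _ hmono)
          _ = 0 := by rw [ih, add_zero]
  -- conclude by Archimedean
  have hsmall : ∀ m, n ≤ m → w ≤ ((1/2)^(m+1) : ℝ) • e := fun m hm =>
    vl_small_of_disj (hα m) hw0 hx he hwx (key m hm)
  have : w ≤ 0 := by
    apply vl_arch_eps harch he
    intro ε hε
    obtain ⟨m, hm⟩ := exists_pow_lt_of_lt_one hε (by norm_num : (1/2:ℝ) < 1)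
    have hm' : ((1/2:ℝ))^(n + m + 1) ≤ ε := by
      calc ((1/2:ℝ))^(n+m+1) ≤ (1/2)^m := by
            apply pow_le_pow_of_le_one (by norm_num) (by norm_num); omega
        _ ≤ ε := hm.le
    exact (hsmall (n+m) (by omega)).trans (vl_smul_le_smul hm' he)
  exact le_antisymm this hw0

end CaseOne

section CaseTwoTools
variable {E : Type*} [Lattice E] [AddCommGroup E] [CovariantClass E E (· + ·) (· ≤ ·)]

/-- ordered group structure (not an instance to avoid diamonds) -/
def vlOG (E : Type*) [Lattice E] [AddCommGroup E] [CovariantClass E E (· + ·) (· ≤ ·)] :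
    IsOrderedAddMonoid E :=
  { add_le_add_left := fun _ _ h c => add_le_add_left h c }

lemma vl_posPart_of_nonneg {a : E} (h : 0 ≤ a) : a⁺ = a := by
  rw [posPart_def, sup_eq_left.2 h]

lemma vl_posPart_inf (a b : E) : (a ⊓ b)⁺ = a⁺ ⊓ b⁺ := by
  letI : DistribLattice E := AddCommGroup.toDistribLattice E
  refine le_antisymm ?_ ?_
  · rw [posPart_def]
    exact sup_le (le_inf (le_trans inf_le_left (le_posPart a))
        (le_trans inf_le_right (le_posPart b)))
      (le_inf (posPart_nonneg a) (posPart_nonneg b))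
  · rw [posPart_def, posPart_def, posPart_def, inf_sup_right]
    refine sup_le ?_ (inf_le_left.trans le_sup_right)
    rw [inf_sup_left]
    exact sup_le le_sup_left (inf_le_right.trans le_sup_right)

lemma vl_sub_inf_sub (a b c : E) : (a - c) ⊓ (b - c) = a ⊓ b - c := by
  have h := add_inf a b (-c)
  simpa [sub_eq_add_neg, add_comm] using h.symm

variable [Module ℝ E] [PosSMulMono ℝ E]

lemma vl_annuli_disj {x e : E} (he : 0 ≤ e) {α β : ℝ} (hβα : β ≤ α) :
    (x - α • e)⁺ ⊓ (β • e - x)⁺ = 0 := by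
  refine le_antisymm ?_ (le_inf (posPart_nonneg _) (posPart_nonneg _))
  calc (x - α • e)⁺ ⊓ (β • e - x)⁺ ≤ ((x - α • e) + (β • e - x))⁺ :=
        vl_posPart_inf_posPart_le _ _
    _ = ((β - α) • e)⁺ := by rw [sub_smul]; congr 1; abel
    _ = 0 := by
        refine posPart_eq_zero.2 ?_
        have := vl_smul_le_smul (sub_nonpos.2 hβα) he
        simpa using this

lemma vl_disj_mono {u v a b : E} (ha : 0 ≤ a) (hb : 0 ≤ b) (hu : 0 ≤ u) (hv : 0 ≤ v)
    (hab : a ⊓ b = 0) {N M : ℝ} (hN : 0 ≤ N) (hM : 0 ≤ M)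
    (hua : u ≤ N • a) (hvb : v ≤ M • b) : u ⊓ v = 0 := by
  have h1 : a ⊓ (M • b) = 0 := vl_smul_inf_zero ha hb hab hM
  have h2 : (M • b) ⊓ (N • a) = 0 := by
    rw [inf_comm] at h1
    have := vl_smul_inf_zero (smul_nonneg hM hb) ha h1 hN
    exact this
  have h3 : (N • a) ⊓ (M • b) = 0 := by rw [inf_comm]; exact h2
  exact le_antisymm ((inf_le_inf hua hvb).trans h3.le) (le_inf hu hv)

lemma vl_inf_sum_zero {a : E} {ι : Type*} (s : Finset ι) (g : ι → E) (ha : 0 ≤ a)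
    (hg : ∀ j ∈ s, 0 ≤ g j) (hd : ∀ j ∈ s, a ⊓ g j = 0) : a ⊓ (∑ j ∈ s, g j) = 0 := by
  classical
  induction s using Finset.cons_induction with
  | empty => simpa using inf_eq_right.2 ha
  | cons j s hj ih =>
      rw [Finset.sum_cons]
      have hsum0 : (0:E) ≤ ∑ i ∈ s, g i := by
        letI := vlOG E
        exact Finset.sum_nonneg (fun i hi => hg i (Finset.mem_cons_of_mem hi))
      refine le_antisymm ?_ (le_inf ha (add_nonneg (hg j (Finset.mem_cons_self j s)) hsum0))
      calc a ⊓ (g j + ∑ i ∈ s, g i) ≤ a ⊓ g j + a ⊓ (∑ i ∈ s, g i) :=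
            vl_inf_add_le ha (hg j (Finset.mem_cons_self j s)) hsum0
        _ = 0 := by
            rw [hd j (Finset.mem_cons_self j s),
              ih (fun i hi => hg i (Finset.mem_cons_of_mem hi))
                 (fun i hi => hd i (Finset.mem_cons_of_mem hi)), add_zero]

lemma vl_sum_inf_sum_zero {ι : Type*} (s t : Finset ι) (f g : ι → E)
    (hf : ∀ i ∈ s, 0 ≤ f i) (hg : ∀ j ∈ t, 0 ≤ g j)
    (hd : ∀ i ∈ s, ∀ j ∈ t, f i ⊓ g j = 0) : (∑ i ∈ s, f i) ⊓ (∑ j ∈ t, g j) = 0 := by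
  letI := vlOG E
  have hs0 : (0:E) ≤ ∑ i ∈ s, f i := Finset.sum_nonneg (fun i hi => hf i hi)
  refine vl_inf_sum_zero t g hs0 hg (fun j hj => ?_)
  rw [inf_comm]
  exact vl_inf_sum_zero s f (hg j hj) hf (fun i hi => by rw [inf_comm]; exact hd i hi j hj)

end CaseTwoTools

section CaseTwoMain
variable {E : Type*} [Lattice E] [AddCommGroup E] [CovariantClass E E (· + ·) (· ≤ ·)]
  [Module ℝ E] [PosSMulMono ℝ E]

/-- Existence of a "tall" element dominated by a multiple of a nonzero `B`. -/
lemma vl_D_exists (harch : VLArchimedean E) {e B : E} (he : 0 ≤ e) (hB0 : 0 ≤ B)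
    {Cb : ℝ} (hCb : 0 ≤ Cb) (hBle : B ≤ Cb • e) (hBne : B ≠ 0) :
    ∃ D : E, 0 ≤ D ∧ D ≤ e ∧ ¬(D ≤ (1/2 : ℝ) • e) ∧ ∃ N : ℝ, 0 ≤ N ∧ D ≤ N • B := by
  by_cases hex : ∃ N : ℕ, ¬(((N : ℝ) • B) ⊓ e ≤ (1/2 : ℝ) • e)
  · obtain ⟨N, hN⟩ := hex
    exact ⟨((N : ℝ) • B) ⊓ e, le_inf (smul_nonneg (Nat.cast_nonneg N) hB0) he,
      inf_le_right, hN, (N : ℝ), Nat.cast_nonneg N, inf_le_left⟩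
  · exfalso
    push_neg at hex
    have hNB : ∀ N : ℕ, (N : ℝ) • B ≤ (1/2 : ℝ) • e := by
      intro N
      set z : E := ((N : ℝ) • B - (1/2 : ℝ) • e)⁺ with hz
      have hz0 : 0 ≤ z := posPart_nonneg _
      have he2 : e - (1/2 : ℝ) • e = (1/2 : ℝ) • e := by
        nth_rewrite 1 [← one_smul ℝ e]
        rw [← sub_smul]; norm_num
      have h1 : z ⊓ ((1/2 : ℝ) • e) = 0 := by
        have heq : z ⊓ (e - (1/2 : ℝ) • e)⁺ = ((((N : ℝ) • B) ⊓ e) - (1/2 : ℝ) • e)⁺ := by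
          rw [hz, ← vl_posPart_inf, vl_sub_inf_sub]
        have h3 : (0:E) ≤ e - (1/2 : ℝ) • e := by
          rw [he2]; exact smul_nonneg (by norm_num) he
        calc z ⊓ ((1/2 : ℝ) • e) = z ⊓ (e - (1/2 : ℝ) • e) := by rw [he2]
          _ = z ⊓ (e - (1/2 : ℝ) • e)⁺ := by rw [vl_posPart_of_nonneg h3]
          _ = ((((N : ℝ) • B) ⊓ e) - (1/2 : ℝ) • e)⁺ := heq
          _ = 0 := posPart_eq_zero.2 (sub_nonpos.2 (hex N))
      have hzle : z ≤ ((N : ℝ) * Cb) • e := by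
        calc z ≤ ((N : ℝ) • B)⁺ := posPart_mono (sub_le_self _ (smul_nonneg (by norm_num) he))
          _ = (N : ℝ) • B := vl_posPart_of_nonneg (smul_nonneg (Nat.cast_nonneg N) hB0)
          _ ≤ (N : ℝ) • (Cb • e) := smul_le_smul_of_nonneg_left hBle (Nat.cast_nonneg N)
          _ = ((N : ℝ) * Cb) • e := (smul_smul _ _ _)
      have hze : z ⊓ e = 0 := by
        have h2 := vl_smul_inf_zero hz0 (smul_nonneg (by norm_num : (0:ℝ) ≤ 1/2) he) h1
          (by norm_num : (0:ℝ) ≤ 2)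
        rw [smul_smul] at h2
        norm_num at h2
        exact h2
      have hzC : z ⊓ (((N : ℝ) * Cb) • e) = 0 :=
        vl_smul_inf_zero hz0 he hze (mul_nonneg (Nat.cast_nonneg N) hCb)
      have hzzero : z = 0 := by
        rw [← inf_eq_left.2 hzle]; exact hzC
      have h4 := posPart_eq_zero.1 hzzero
      exact sub_nonpos.1 h4
    apply hBne
    refine le_antisymm ?_ hB0
    apply harch B ((1/2 : ℝ) • e)
    intro n
    rw [← Nat.cast_smul_eq_nsmul ℝ n B]
    exact hNB n

/-- Partial sums of a series dominated by `(1/2)^k • e` are uniformly Cauchy. -/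
lemma vl_cauchy_sum {e : E} (he : 0 ≤ e) (g : ℕ → E) (hg0 : ∀ k, 0 ≤ g k)
    (hgle : ∀ k, g k ≤ ((1/2 : ℝ)^k) • e) :
    ∀ ε : ℝ, 0 < ε → ∃ N : ℕ, ∀ m n : ℕ, N ≤ m → N ≤ n →
      |(∑ k ∈ Finset.range m, g k) - (∑ k ∈ Finset.range n, g k)| ≤ ε • e := by
  have key : ∀ m n : ℕ, n ≤ m →
      (∑ k ∈ Finset.range m, g k) - (∑ k ∈ Finset.range n, g k) ≤ (2 * (1/2 : ℝ)^n) • e := by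
    intro m n hnm
    rw [← Finset.sum_Ico_eq_sub _ hnm]
    calc ∑ k ∈ Finset.Ico n m, g k ≤ ∑ k ∈ Finset.Ico n m, ((1/2 : ℝ)^k) • e := by
          letI := vlOG E
          exact Finset.sum_le_sum (fun k _ => hgle k)
      _ = (∑ k ∈ Finset.Ico n m, (1/2 : ℝ)^k) • e := by rw [Finset.sum_smul]
      _ ≤ (2 * (1/2 : ℝ)^n) • e := by
          refine vl_smul_le_smul ?_ he
          rw [geom_sum_Ico (by norm_num) hnm]
          have h1 : (0:ℝ) ≤ (1/2)^m := by positivity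
          have h2 : ((1/2:ℝ)^m - (1/2)^n) / (1/2 - 1) = 2 * ((1/2)^n - (1/2)^m) := by ring
          rw [h2]; linarith
  intro ε hε
  obtain ⟨N, hN⟩ := exists_pow_lt_of_lt_one (show (0:ℝ) < ε/2 by linarith)
    (by norm_num : (1/2 : ℝ) < 1)
  refine ⟨N, fun m n hm hn => ?_⟩
  have hmono : ∀ i j : ℕ, i ≤ j →
      (∑ k ∈ Finset.range i, g k) ≤ (∑ k ∈ Finset.range j, g k) := by
    intro i j hij
    letI := vlOG E
    exact Finset.sum_le_sum_of_subset_of_nonneg (Finset.range_subset_range.2 hij) (fun k _ _ => hg0 k)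
  have hbound : ∀ i j : ℕ, N ≤ j → j ≤ i →
      (∑ k ∈ Finset.range i, g k) - (∑ k ∈ Finset.range j, g k) ≤ ε • e := by
    intro i j hNj hji
    refine (key i j hji).trans (vl_smul_le_smul ?_ he)
    have h3 : ((1/2:ℝ))^j ≤ (1/2 : ℝ)^N := by
      apply pow_le_pow_of_le_one (by norm_num) (by norm_num)
      omega
    nlinarith [hN.le]
  rcases le_total n m with h | h
  · rw [abs_of_nonneg (sub_nonneg.2 (hmono n m h))]
    exact hbound m n hn h
  · rw [abs_of_nonpos (sub_nonpos.2 (hmono m n h)), neg_sub]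
    exact hbound n m hm h

/-- Limit of an increasing uniformly-Cauchy sequence of partial sums. -/
lemma vl_limit (harch : VLArchimedean E) (huc : UniformlyComplete E) {e : E} (he : 0 ≤ e)
    (g : ℕ → E) (hg0 : ∀ k, 0 ≤ g k) (hgle : ∀ k, g k ≤ ((1/2 : ℝ)^k) • e) :
    ∃ f : E, 0 ≤ f ∧ (∀ K, (∑ k ∈ Finset.range K, g k) ≤ f) ∧
      (∀ ε : ℝ, 0 < ε → ∃ N : ℕ, ∀ n, N ≤ n → f ≤ (∑ k ∈ Finset.range n, g k) + ε • e) := by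
  obtain ⟨f, hf⟩ := huc e he (fun K => ∑ k ∈ Finset.range K, g k)
    (vl_cauchy_sum he g hg0 hgle)
  have hmono : ∀ i j : ℕ, i ≤ j →
      (∑ k ∈ Finset.range i, g k) ≤ (∑ k ∈ Finset.range j, g k) := by
    intro i j hij
    letI := vlOG E
    exact Finset.sum_le_sum_of_subset_of_nonneg (Finset.range_subset_range.2 hij) (fun k _ _ => hg0 k)
  have hS : ∀ K, (∑ k ∈ Finset.range K, g k) ≤ f := by
    intro K
    have h0 : (∑ k ∈ Finset.range K, g k) - f ≤ 0 := by
      apply vl_arch_eps harch he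
      intro ε hε
      obtain ⟨N, hN⟩ := hf ε hε
      have h1 := hN (max K N) (le_max_right _ _)
      calc (∑ k ∈ Finset.range K, g k) - f
          ≤ (∑ k ∈ Finset.range (max K N), g k) - f :=
            sub_le_sub_right (hmono _ _ (le_max_left _ _)) f
        _ ≤ |(∑ k ∈ Finset.range (max K N), g k) - f| := le_abs_self _
        _ ≤ ε • e := h1
    exact sub_nonpos.1 h0
  refine ⟨f, ?_, hS, fun ε hε => ?_⟩
  · have h5 := hS 0
    simpa using h5
  obtain ⟨N, hN⟩ := hf ε hε
  refine ⟨N, fun n hn => ?_⟩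
  have h1 := hN n hn
  have h2 : f - (∑ k ∈ Finset.range n, g k) ≤ |(∑ k ∈ Finset.range n, g k) - f| := by
    rw [abs_sub_comm]
    exact le_abs_self _
  have h3 := h2.trans h1
  rw [sub_le_iff_le_add] at h3
  rw [add_comm]
  exact h3

end CaseTwoMain

section CaseTwoFinal
variable {E : Type*} [Lattice E] [AddCommGroup E] [CovariantClass E E (· + ·) (· ≤ ·)]
  [Module ℝ E] [PosSMulMono ℝ E]

lemma vl_B_le_upper (x e : E) (hx : 0 ≤ x) (he : 0 ≤ e) (m : ℕ) :
    vlB x e m ≤ (3*(1/2 : ℝ)^(m+1)) • e := by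
  refine inf_le_right.trans ?_
  rw [posPart_def]
  exact sup_le (sub_le_self _ hx) (smul_nonneg (by positivity) he)

lemma vl_B_le_lower (x e : E) (m : ℕ) :
    vlB x e m ≤ (x - ((1/2 : ℝ)^(m+1)) • e)⁺ :=
  inf_le_left.trans (posPart_mono (sub_le_sub_right inf_le_left _))

lemma vl_f_notin {x e : E} (hx : 0 ≤ x) (he : 0 ≤ e)
    (G : ℕ → E) (idx : ℕ → ℕ)
    (hG0 : ∀ k, 0 ≤ G k) (hGhalf : ∀ k, ¬(G k ≤ (1/2 : ℝ) • e))
    (hGq : ∀ k, G k ⊓ (x - (3 * (1/2 : ℝ)^(idx k + 1)) • e)⁺ = 0)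
    (hidx : ∀ k, 4 * k ≤ idx k)
    (f : E) (hf : ∀ k, ((1/2 : ℝ)^k) • G k ≤ f)
    {c : ℝ} (hc : 0 ≤ c) (hfc : f ≤ c • x) : False := by
  obtain ⟨k, hk⟩ := exists_pow_lt_of_lt_one
    (show (0:ℝ) < 1/(6*(c+1)) by positivity) (by norm_num : (1/2 : ℝ) < 1)
  set β : ℝ := 3 * (1/2 : ℝ)^(idx k + 1) with hβ
  have hβ0 : (0:ℝ) ≤ β := by positivity
  set C : ℝ := 2^k * c with hCdef
  have hC0 : (0:ℝ) ≤ C := by positivity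
  have hmix : (2:ℝ)^k * (1/2)^k = 1 := by rw [← mul_pow]; norm_num
  have hDC : G k ≤ C • x := by
    have h1 := smul_le_smul_of_nonneg_left (le_trans (hf k) hfc)
      (show (0:ℝ) ≤ 2^k by positivity)
    rw [smul_smul, smul_smul, hmix, one_smul] at h1
    exact h1
  have hsplit : x = x ⊓ (β • e) + (x - β • e)⁺ := vl_inf_add_posPart_sub x (β • e)
  have hDfin : G k ≤ C • (x ⊓ (β • e)) + C • (x - β • e)⁺ := by
    rw [← smul_add, ← hsplit]; exact hDC
  have hxβ0 : (0:E) ≤ x ⊓ (β • e) := le_inf hx (smul_nonneg hβ0 he)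
  have hGsmall : G k ≤ (C * β) • e := by
    calc G k = G k ⊓ (C • (x ⊓ (β • e)) + C • (x - β • e)⁺) := (inf_eq_left.2 hDfin).symm
      _ ≤ G k ⊓ (C • (x ⊓ (β • e))) + G k ⊓ (C • (x - β • e)⁺) :=
          vl_inf_add_le (hG0 k) (smul_nonneg hC0 hxβ0) (smul_nonneg hC0 (posPart_nonneg _))
      _ = G k ⊓ (C • (x ⊓ (β • e))) := by
          rw [vl_smul_inf_zero (hG0 k) (posPart_nonneg _) (hGq k) hC0, add_zero]
      _ ≤ C • (x ⊓ (β • e)) := inf_le_right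
      _ ≤ C • (β • e) := smul_le_smul_of_nonneg_left inf_le_right hC0
      _ = (C * β) • e := smul_smul _ _ _
  have hnum : C * β ≤ 1/2 := by
    have h1 : (1/2:ℝ)^(idx k + 1) ≤ (1/2)^(4*k+1) := by
      apply pow_le_pow_of_le_one (by norm_num) (by norm_num)
      have := hidx k; omega
    have h4 : (0:ℝ) ≤ (1/2:ℝ)^k := by positivity
    have h5 : (1/2:ℝ)^(2*k) ≤ 1 := pow_le_one₀ (by norm_num) (by norm_num)
    have e1 : (2:ℝ)^k * (1/2)^(4*k+1) ≤ (1/2) * (1/2)^k := by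
      have hdec : (1/2:ℝ)^(4*k+1) = ((1/2)^k * (1/2)^k) * ((1/2)^(2*k) * (1/2)) := by
        rw [show 4*k+1 = (k+k)+(2*k+1) by ring, pow_add, pow_add, pow_succ]
      rw [hdec]
      calc (2:ℝ)^k * (((1/2)^k * (1/2)^k) * ((1/2)^(2*k) * (1/2)))
          = ((2:ℝ)^k * (1/2)^k) * ((1/2)^k * ((1/2)^(2*k) * (1/2))) := by ring
        _ = (1/2)^k * ((1/2)^(2*k) * (1/2)) := by rw [hmix, one_mul]
        _ ≤ (1/2)^k * (1 * (1/2)) := by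
            apply mul_le_mul_of_nonneg_left _ h4
            exact mul_le_mul_of_nonneg_right h5 (by norm_num)
        _ = (1/2) * (1/2)^k := by ring
    have h6 : C * β ≤ 3 * c * ((1/2) * (1/2)^k) := by
      calc C * β = 3 * c * ((2:ℝ)^k * (1/2)^(idx k + 1)) := by rw [hCdef, hβ]; ring
        _ ≤ 3 * c * ((2:ℝ)^k * (1/2)^(4*k+1)) := by
            apply mul_le_mul_of_nonneg_left _ (by positivity)
            exact mul_le_mul_of_nonneg_left h1 (by positivity)
        _ ≤ 3 * c * ((1/2) * (1/2)^k) := mul_le_mul_of_nonneg_left e1 (by positivity)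
    have h7 : 3 * c * ((1/2) * (1/2)^k) ≤ 3 * c * ((1/2) * (1/(6*(c+1)))) := by
      apply mul_le_mul_of_nonneg_left _ (by positivity)
      exact mul_le_mul_of_nonneg_left hk.le (by norm_num)
    have h8 : 3 * c * ((1/2) * (1/(6*(c+1)))) ≤ 1/2 := by
      have hc1 : (0:ℝ) < c + 1 := by linarith
      rw [show 3 * c * ((1/2) * (1/(6*(c+1)))) = c / (4*(c+1)) by field_simp; ring,
        div_le_iff₀ (by positivity)]
      linarith
    linarith
  exact hGhalf k (hGsmall.trans (vl_smul_le_smul hnum he))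

lemma vl_caseII (harch : VLArchimedean E) (huc : UniformlyComplete E)
    {x e : E} (hx : 0 ≤ x) (he : 0 ≤ e)
    (P : Submodule ℝ E)
    (hmem : ∀ y : E, y ∈ P ↔ ∃ c : ℝ, 0 ≤ c ∧ |y| ≤ c • x)
    (hprime : ∀ y z : E, y ⊓ z ∈ P → y ∈ P ∨ z ∈ P)
    (hne : ∀ n : ℕ, ∃ m, n ≤ m ∧ vlB x e m ≠ 0) : False := by
  choose F hF1 hF2 using hne
  set ms : ℕ → ℕ := fun k => Nat.rec (F 0) (fun _ prev => F (prev + 2)) k with hmsdef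
  have hms0 : ms 0 = F 0 := rfl
  have hmsS : ∀ k, ms (k+1) = F (ms k + 2) := fun k => rfl
  have hms_ne : ∀ k, vlB x e (ms k) ≠ 0 := by
    intro k; cases k with
    | zero => exact hF2 0
    | succ k => rw [hmsS k]; exact hF2 _
  have hms_step : ∀ k, ms k + 2 ≤ ms (k+1) := by
    intro k; rw [hmsS k]; exact hF1 _
  have hms_ge : ∀ k, 2 * k ≤ ms k := by
    intro k; induction k with
    | zero => omega
    | succ k ih => have := hms_step k; omega
  have hms_lt : ∀ i j, i < j → ms i + 2 ≤ ms j := by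
    intro i j hij
    induction j with
    | zero => omega
    | succ j ih =>
        rcases Nat.lt_or_ge i j with h | h
        · have := ih h; have := hms_step j; omega
        · have : i = j := by omega
          subst this; exact hms_step i
  -- the tall disjoint pieces
  have hDex : ∀ k, ∃ D : E, 0 ≤ D ∧ D ≤ e ∧ ¬(D ≤ (1/2 : ℝ) • e) ∧
      ∃ N : ℝ, 0 ≤ N ∧ D ≤ N • vlB x e (ms k) := fun k =>
    vl_D_exists harch he (vlB_nonneg x e _) (by positivity)
      (vl_B_le_upper x e hx he _) (hms_ne k)
  choose D hD0 hDe hDhalf N hN0 hDN using hDex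
  -- pairwise disjointness
  have hdisj : ∀ i j, i < j → D i ⊓ D j = 0 := by
    intro i j hij
    have hβα : 3*(1/2 : ℝ)^(ms j + 1) ≤ (1/2 : ℝ)^(ms i + 1) := by
      have h1 : (1/2:ℝ)^(ms j + 1) ≤ (1/2)^(ms i + 3) := by
        apply pow_le_pow_of_le_one (by norm_num) (by norm_num)
        have := hms_lt i j hij; omega
      have h2 : (1/2:ℝ)^(ms i + 3) = (1/4)*(1/2)^(ms i + 1) := by
        rw [show ms i + 3 = (ms i + 1) + 2 by ring, pow_add]; ring
      have h3 : (0:ℝ) ≤ (1/2:ℝ)^(ms i + 1) := by positivity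
      rw [h2] at h1; nlinarith
    have hbase : (x - ((1/2 : ℝ)^(ms i + 1)) • e)⁺ ⊓ ((3*(1/2 : ℝ)^(ms j + 1)) • e - x)⁺ = 0 :=
      vl_annuli_disj he hβα
    refine vl_disj_mono (posPart_nonneg _) (posPart_nonneg _) (hD0 i) (hD0 j) hbase
      (hN0 i) (hN0 j) ?_ ?_
    · exact (hDN i).trans (smul_le_smul_of_nonneg_left (vl_B_le_lower x e _) (hN0 i))
    · exact (hDN j).trans (smul_le_smul_of_nonneg_left inf_le_right (hN0 j))
  -- D j is disjoint from the far upper part of x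
  have hDq : ∀ j, D j ⊓ (x - (3*(1/2 : ℝ)^(ms j + 1)) • e)⁺ = 0 := by
    intro j
    have hbase : ((3*(1/2 : ℝ)^(ms j + 1)) • e - x)⁺ ⊓ (x - (3*(1/2 : ℝ)^(ms j + 1)) • e)⁺ = 0 := by
      have hneg : x - (3*(1/2 : ℝ)^(ms j + 1)) • e = -((3*(1/2 : ℝ)^(ms j + 1)) • e - x) :=
        (neg_sub _ _).symm
      rw [hneg, posPart_neg]
      exact posPart_inf_negPart_eq_zero _
    refine vl_disj_mono (posPart_nonneg _) (posPart_nonneg _) (hD0 j) (posPart_nonneg _)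
      hbase (hN0 j) (zero_le_one) ?_ ?_
    · exact (hDN j).trans (smul_le_smul_of_nonneg_left inf_le_right (hN0 j))
    · rw [one_smul]
  -- the two series
  set g1 : ℕ → E := fun k => ((1/2 : ℝ)^k) • D (2*k) with hg1def
  set g2 : ℕ → E := fun k => ((1/2 : ℝ)^k) • D (2*k+1) with hg2def
  have hg10 : ∀ k, 0 ≤ g1 k := fun k => smul_nonneg (by positivity) (hD0 _)
  have hg20 : ∀ k, 0 ≤ g2 k := fun k => smul_nonneg (by positivity) (hD0 _)
  have hg1le : ∀ k, g1 k ≤ ((1/2 : ℝ)^k) • e := fun k =>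
    smul_le_smul_of_nonneg_left (hDe _) (by positivity)
  have hg2le : ∀ k, g2 k ≤ ((1/2 : ℝ)^k) • e := fun k =>
    smul_le_smul_of_nonneg_left (hDe _) (by positivity)
  obtain ⟨f1, hf10, hf1lb, hf1ub⟩ := vl_limit harch huc he g1 hg10 hg1le
  obtain ⟨f2, hf20, hf2lb, hf2ub⟩ := vl_limit harch huc he g2 hg20 hg2le
  -- partial sums disjoint
  have hSTn : ∀ n : ℕ, (∑ k ∈ Finset.range n, g1 k) ⊓ (∑ k ∈ Finset.range n, g2 k) = 0 := by
    intro n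
    refine vl_sum_inf_sum_zero _ _ _ _ (fun i _ => hg10 i) (fun j _ => hg20 j) ?_
    intro i _ j _
    have hDij : D (2*i) ⊓ D (2*j+1) = 0 := by
      rcases Nat.lt_or_ge (2*i) (2*j+1) with h | h
      · exact hdisj _ _ h
      · have h2 : 2*j+1 < 2*i := by omega
        rw [inf_comm]; exact hdisj _ _ h2
    exact vl_disj_mono (hD0 _) (hD0 _) (hg10 i) (hg20 j) hDij
      (by positivity : (0:ℝ) ≤ (1/2:ℝ)^i) (by positivity : (0:ℝ) ≤ (1/2:ℝ)^j)
      (le_of_eq rfl) (le_of_eq rfl)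
  -- f1 ⊓ f2 = 0
  have hf12 : f1 ⊓ f2 = 0 := by
    refine le_antisymm ?_ (le_inf hf10 hf20)
    apply vl_arch_eps harch he
    intro ε hε
    obtain ⟨N1, hN1⟩ := hf1ub ε hε
    obtain ⟨N2, hN2⟩ := hf2ub ε hε
    set n := max N1 N2 with hn
    have h1 : f1 ≤ (∑ k ∈ Finset.range n, g1 k) + ε • e := hN1 n (le_max_left _ _)
    have h2 : f2 ≤ (∑ k ∈ Finset.range n, g2 k) + ε • e := hN2 n (le_max_right _ _)
    calc f1 ⊓ f2 ≤ ((∑ k ∈ Finset.range n, g1 k) + ε • e) ⊓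
          ((∑ k ∈ Finset.range n, g2 k) + ε • e) := inf_le_inf h1 h2
      _ = ε • e + ((∑ k ∈ Finset.range n, g1 k) ⊓ (∑ k ∈ Finset.range n, g2 k)) := by
          rw [add_inf, add_comm (ε • e), add_comm (ε • e)]
      _ = ε • e := by rw [hSTn n, add_zero]
  have hmemf12 : f1 ⊓ f2 ∈ P := by rw [hf12]; exact P.zero_mem
  -- term bounds
  have hterm1 : ∀ k, ((1/2 : ℝ)^k) • D (2*k) ≤ f1 := by
    intro k
    refine le_trans ?_ (hf1lb (k+1))
    letI := vlOG E
    exact Finset.single_le_sum (f := g1) (fun i _ => hg10 i) (Finset.self_mem_range_succ k)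
  have hterm2 : ∀ k, ((1/2 : ℝ)^k) • D (2*k+1) ≤ f2 := by
    intro k
    refine le_trans ?_ (hf2lb (k+1))
    letI := vlOG E
    exact Finset.single_le_sum (f := g2) (fun i _ => hg20 i) (Finset.self_mem_range_succ k)
  rcases hprime f1 f2 hmemf12 with h | h
  · obtain ⟨c, hc, habs⟩ := (hmem f1).1 h
    rw [abs_of_nonneg hf10] at habs
    exact vl_f_notin hx he (fun k => D (2*k)) (fun k => ms (2*k)) (fun k => hD0 _)
      (fun k => hDhalf _) (fun k => hDq _) (fun k => (show 4*k ≤ ms (2*k) by have := hms_ge (2*k); omega))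
      f1 hterm1 hc habs
  · obtain ⟨c, hc, habs⟩ := (hmem f2).1 h
    rw [abs_of_nonneg hf20] at habs
    exact vl_f_notin hx he (fun k => D (2*k+1)) (fun k => ms (2*k+1)) (fun k => hD0 _)
      (fun k => hDhalf _) (fun k => hDq _) (fun k => (show 4*k ≤ ms (2*k+1) by have := hms_ge (2*k+1); omega))
      f2 hterm2 hc habs

end CaseTwoFinal

section Atom
variable {E : Type*} [Lattice E] [AddCommGroup E] [CovariantClass E E (· + ·) (· ≤ ·)]
  [Module ℝ E] [PosSMulMono ℝ E]

lemma vl_atom_scalar (harch : VLArchimedean E) {a b : E} (ha : 0 < a)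
    (hatom : ∀ p q : E, 0 ≤ p → p ≤ a → 0 ≤ q → q ≤ a → p ⊓ q = 0 → p = 0 ∨ q = 0)
    (hb0 : 0 ≤ b) (hba : b ≤ a) (hbne : b ≠ 0) : ∃ l : ℝ, 0 < l ∧ b = l • a := by
  set S : Set ℝ := {c : ℝ | 0 ≤ c ∧ c • a ≤ b} with hS
  have h0S : (0:ℝ) ∈ S := ⟨le_refl 0, by rw [zero_smul]; exact hb0⟩
  have hub : ∀ c ∈ S, c ≤ 1 := by
    rintro c ⟨hc0, hca⟩
    by_contra hc1
    push_neg at hc1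
    have h1 : (c - 1) • a ≤ 0 := by
      rw [sub_smul, one_smul, sub_nonpos]
      exact hca.trans hba
    have h2 : a ≤ 0 := by
      have h3 := smul_le_smul_of_nonneg_left h1 (inv_nonneg.2 (by linarith : (0:ℝ) ≤ c - 1))
      rw [smul_zero, inv_smul_smul₀ (by linarith : c - 1 ≠ 0)] at h3
      exact h3
    exact absurd (h2.trans_lt ha) (lt_irrefl a)
  have hbdd : BddAbove S := ⟨1, fun c hc => hub c hc⟩
  set l := sSup S with hl
  have hl0 : 0 ≤ l := le_csSup hbdd h0S
  have hdich : ∀ c : ℝ, 0 < c → c < 1 → (b ≤ c • a ∨ c • a ≤ b) := by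
    intro c hc0 hc1
    have hp : (b - c • a)⁺ ≤ a := by
      calc (b - c • a)⁺ ≤ b⁺ := posPart_mono (sub_le_self _ (smul_nonneg hc0.le ha.le))
        _ = b := vl_posPart_of_nonneg hb0
        _ ≤ a := hba
    have hq : (c • a - b)⁺ ≤ a := by
      calc (c • a - b)⁺ ≤ (c • a)⁺ := posPart_mono (sub_le_self _ hb0)
        _ = c • a := vl_posPart_of_nonneg (smul_nonneg hc0.le ha.le)
        _ ≤ (1:ℝ) • a := vl_smul_le_smul hc1.le ha.le
        _ = a := one_smul _ _
    have hpq : (b - c • a)⁺ ⊓ (c • a - b)⁺ = 0 := by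
      rw [show c • a - b = -(b - c • a) by abel, posPart_neg]
      exact posPart_inf_negPart_eq_zero _
    rcases hatom _ _ (posPart_nonneg _) hp (posPart_nonneg _) hq hpq with h | h
    · exact Or.inl (sub_nonpos.1 (posPart_eq_zero.1 h))
    · exact Or.inr (sub_nonpos.1 (posPart_eq_zero.1 h))
  have hla : l • a ≤ b := by
    have h1 : l • a - b ≤ 0 := by
      apply vl_arch_eps harch ha.le
      intro ε hε
      obtain ⟨c, hcS, hcl⟩ := exists_lt_of_lt_csSup ⟨0, h0S⟩ (show l - ε < l by linarith)
      calc l • a - b ≤ l • a - c • a := sub_le_sub_left hcS.2 _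
        _ = (l - c) • a := (sub_smul _ _ _).symm
        _ ≤ ε • a := vl_smul_le_smul (by linarith) ha.le
    exact sub_nonpos.1 h1
  have hbl : b ≤ l • a := by
    have h1 : b - l • a ≤ 0 := by
      apply vl_arch_eps harch ha.le
      intro ε hε
      have hcb : b ≤ (l + ε) • a := by
        rcases le_or_gt 1 (l + ε) with h | h
        · calc b ≤ a := hba
            _ = (1:ℝ) • a := (one_smul _ _).symm
            _ ≤ (l + ε) • a := vl_smul_le_smul h ha.le
        · have hlε0 : 0 < l + ε := by linarith
          rcases hdich (l + ε) hlε0 h with h2 | h2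
          · exact h2
          · exact absurd (le_csSup hbdd ⟨hlε0.le, h2⟩) (by linarith)
      calc b - l • a ≤ (l + ε) • a - l • a := sub_le_sub_right hcb _
        _ = ε • a := by rw [add_smul]; abel
    exact sub_nonpos.1 h1
  have hbeq : b = l • a := le_antisymm hbl hla
  have hlne : l ≠ 0 := by
    intro h; apply hbne; rw [hbeq, h, zero_smul]
  exact ⟨l, lt_of_le_of_ne hl0 (Ne.symm hlne), hbeq⟩

end Atom

theorem statement5 (E : Type*) [Lattice E] [AddCommGroup E] [Module ℝ E]
    [CovariantClass E E (· + ·) (· ≤ ·)] [PosSMulMono ℝ E]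
    (harch : VLArchimedean E) (huc : UniformlyComplete E) (hsu : HasStrongUnit E)
    (P : Submodule ℝ E) (hP : IsPrimeIdeal P) (hprin : IsPrincipalIdeal P) :
    IsMaximalIdeal P ∧
      ∃ a : E, IsAtomElem a ∧ (P : Set E) = {x : E | |x| ⊓ |a| = 0} := by
  obtain ⟨hPid, hPne, hPpr⟩ := hP
  obtain ⟨x, hx0, hxmem⟩ := hprin
  obtain ⟨e, he0, hsue⟩ := hsu
  -- the strong unit is not in P
  have heP : e ∉ P := by
    intro heP
    apply hPne
    obtain ⟨c, hc0, hce⟩ := (hxmem e).1 heP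
    rw [abs_of_nonneg he0] at hce
    rw [Submodule.eq_top_iff']
    intro z
    obtain ⟨cz, hcz0, hcz⟩ := hsue z
    refine (hxmem z).2 ⟨cz * c, mul_nonneg hcz0.le hc0, ?_⟩
    calc |z| ≤ cz • e := hcz
      _ ≤ cz • (c • x) := smul_le_smul_of_nonneg_left hce hcz0.le
      _ = (cz * c) • x := smul_smul _ _ _
  by_cases hcase : ∃ n : ℕ, ∀ m, n ≤ m → vlB x e m = 0
  swap
  · push_neg at hcase
    exact absurd (vl_caseII harch huc hx0 he0 P hxmem hPpr hcase) id
  obtain ⟨n, hB⟩ := hcase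
  set M : ℝ := (2:ℝ)^(n+1) with hM
  have hM0 : (0:ℝ) ≤ M := by positivity
  set a : E := (e - M • x)⁺ with hadef
  have hax : a ⊓ x = 0 := vl_caseI harch hx0 he0 n hB
  have ha0 : 0 ≤ a := posPart_nonneg _
  have hsplit : e = e ⊓ (M • x) + a := vl_inf_add_posPart_sub e (M • x)
  have hMx0 : (0:E) ≤ e ⊓ (M • x) := le_inf he0 (smul_nonneg hM0 hx0)
  have hMxP : e ⊓ (M • x) ∈ P :=
    (hxmem _).2 ⟨M, hM0, by rw [abs_of_nonneg hMx0]; exact inf_le_right⟩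
  have haP : a ∉ P := by
    intro haP
    exact heP (by rw [hsplit]; exact P.add_mem hMxP haP)
  have hane : a ≠ 0 := fun h => haP (h ▸ P.zero_mem)
  have hapos : 0 < a := ha0.lt_of_ne (Ne.symm hane)
  have haabs : |a| = a := abs_of_nonneg ha0
  -- characterize P as the disjoint complement of a
  have hPset : ∀ z : E, z ∈ P ↔ |z| ⊓ a = 0 := by
    intro z
    constructor
    · intro hz
      obtain ⟨c, hc0, hzc⟩ := (hxmem z).1 hz
      have hcx : (c • x) ⊓ a = 0 := by
        rw [inf_comm]; exact vl_smul_inf_zero ha0 hx0 hax hc0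
      refine le_antisymm ?_ (le_inf (abs_nonneg z) ha0)
      calc |z| ⊓ a ≤ (c • x) ⊓ a := inf_le_inf_right _ hzc
        _ = 0 := hcx
    · intro hz
      obtain ⟨cz, hcz0, hcz⟩ := hsue z
      refine (hxmem z).2 ⟨cz * M, mul_nonneg hcz0.le hM0, ?_⟩
      have h1 : |z| = |z| ⊓ (cz • e) := (inf_eq_left.2 hcz).symm
      have h2 : cz • e = cz • (e ⊓ (M • x)) + cz • a := by rw [← smul_add, ← hsplit]
      have h3 : |z| ⊓ (cz • a) = 0 := vl_smul_inf_zero (abs_nonneg z) ha0 hz hcz0.le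
      calc |z| = |z| ⊓ (cz • (e ⊓ (M • x)) + cz • a) := by rw [← h2, ← h1]
        _ ≤ |z| ⊓ (cz • (e ⊓ (M • x))) + |z| ⊓ (cz • a) :=
            vl_inf_add_le (abs_nonneg z) (smul_nonneg hcz0.le hMx0)
              (smul_nonneg hcz0.le ha0)
        _ = |z| ⊓ (cz • (e ⊓ (M • x))) := by rw [h3, add_zero]
        _ ≤ cz • (e ⊓ (M • x)) := inf_le_right
        _ ≤ cz • (M • x) := smul_le_smul_of_nonneg_left inf_le_right hcz0.le
        _ = (cz * M) • x := smul_smul _ _ _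
  -- a is an atom
  have hatomprop : ∀ p q : E, 0 ≤ p → p ≤ a → 0 ≤ q → q ≤ a → p ⊓ q = 0 → p = 0 ∨ q = 0 := by
    intro p q hp0 hpa hq0 hqa hpq
    by_contra hcon
    push_neg at hcon
    obtain ⟨hpne, hqne⟩ := hcon
    have hpP : p ∉ P := by
      intro hp
      have h := (hPset p).1 hp
      rw [abs_of_nonneg hp0] at h
      exact hpne ((inf_eq_left.2 hpa).symm.trans h)
    have hqP : q ∉ P := by
      intro hq
      have h := (hPset q).1 hq
      rw [abs_of_nonneg hq0] at h
      exact hqne ((inf_eq_left.2 hqa).symm.trans h)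
    rcases hPpr p q (by rw [hpq]; exact P.zero_mem) with h | h
    · exact hpP h
    · exact hqP h
  have hatom : IsAtomElem a := ⟨hapos, hatomprop⟩
  -- maximality
  have hmax : IsMaximalIdeal P := by
    refine ⟨hPid, hPne, ?_⟩
    intro J hJ hPJ
    by_cases hJP : J ≤ P
    · exact Or.inl (le_antisymm hJP hPJ)
    · right
      obtain ⟨z0, hz0J, hz0P⟩ := SetLike.not_le_iff_exists.1 hJP
      set b : E := |z0| ⊓ a with hbdef
      have hb0 : 0 ≤ b := le_inf (abs_nonneg _) ha0
      have hba : b ≤ a := inf_le_right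
      have hbJ : b ∈ J := hJ b z0 (by rw [abs_of_nonneg hb0]; exact inf_le_left) hz0J
      have hbne : b ≠ 0 := fun h => hz0P ((hPset z0).2 h)
      obtain ⟨l, hl0, hbl⟩ := vl_atom_scalar harch hapos hatomprop hb0 hba hbne
      have haJ : a ∈ J := by
        have h : a = l⁻¹ • b := by
          rw [hbl, smul_smul, inv_mul_cancel₀ hl0.ne', one_smul]
        rw [h]
        exact Submodule.smul_mem J _ hbJ
      have heJ : e ∈ J := by
        rw [hsplit]
        exact J.add_mem (hPJ hMxP) haJ
      rw [Submodule.eq_top_iff']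
      intro z
      obtain ⟨cz, hcz0, hcz⟩ := hsue z
      refine hJ z (cz • e) ?_ (Submodule.smul_mem J cz heJ)
      rw [abs_of_nonneg (smul_nonneg hcz0.le he0)]
      exact hcz
  refine ⟨hmax, a, hatom, ?_⟩
  ext z
  simp only [Set.mem_setOf_eq, SetLike.mem_coe]
  rw [haabs]
  exact hPset z
end

section
/- Let E be an Archimedean uniformly complete vector lattice. If E contains a principal prime ideal, then E has a strong unit. -/
set_option linter.unusedSectionVars false
set_option maxHeartbeats 1000000

section Statement6Helpers

variable {E : Type*} [Lattice E] [AddCommGroup E] [Module ℝ E]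
    [CovariantClass E E (· + ·) (· ≤ ·)] [PosSMulMono ℝ E]

private lemma smul_le_smul_vec {c d : ℝ} (h : c ≤ d) {a : E} (ha : 0 ≤ a) :
    c • a ≤ d • a := by
  have h2 : 0 ≤ (d - c) • a := smul_nonneg (sub_nonneg.2 h) ha
  rw [sub_smul] at h2
  exact sub_nonneg.1 h2

private lemma inf_add_le3 {u a b : E} (hu : 0 ≤ u) (ha : 0 ≤ a) (hb : 0 ≤ b) :
    u ⊓ (a + b) ≤ u ⊓ a + u ⊓ b := by
  have e1 : u ⊓ a + u ⊓ b = ((u + u) ⊓ (a + u)) ⊓ ((u + b) ⊓ (a + b)) := by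
    rw [add_inf u b (u ⊓ a), inf_add u a u, inf_add u a b]
  rw [e1]
  refine le_inf (le_inf ?_ ?_) (le_inf ?_ ?_)
  · exact le_trans inf_le_left (le_add_of_nonneg_left hu)
  · exact le_trans inf_le_left (le_add_of_nonneg_left ha)
  · exact le_trans inf_le_left (le_add_of_nonneg_right hb)
  · exact inf_le_right

private lemma inf_zero_mono {u₁ u₂ v₁ v₂ : E} (hu₁ : 0 ≤ u₁) (hv₁ : 0 ≤ v₁)
    (hu : u₁ ≤ u₂) (hv : v₁ ≤ v₂) (h : u₂ ⊓ v₂ = 0) : u₁ ⊓ v₁ = 0 :=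
  le_antisymm (h ▸ inf_le_inf hu hv) (le_inf hu₁ hv₁)

private lemma seq_exists {α : Type*} (Good : α → Prop) (Rel : α → α → Prop)
    (base : ∃ p, Good p) (step : ∀ p, Good p → ∃ q, Good q ∧ Rel p q) :
    ∃ s : ℕ → α, (∀ k, Good (s k)) ∧ ∀ k, Rel (s k) (s (k + 1)) := by
  choose f hf1 hf2 using step
  obtain ⟨p0, hp0⟩ := base
  let t : ℕ → {p // Good p} := fun n =>
    Nat.rec ⟨p0, hp0⟩ (fun _ ih => ⟨f ih.1 ih.2, hf1 ih.1 ih.2⟩) n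
  exact ⟨fun n => (t n).1, fun n => (t n).2, fun k => hf2 (t k).1 (t k).2⟩


private lemma sum_le_sum_range {W W' : ℕ → E} (h : ∀ i, W i ≤ W' i) (K : ℕ) :
    ∑ i ∈ Finset.range K, W i ≤ ∑ i ∈ Finset.range K, W' i := by
  induction K with
  | zero => simp
  | succ K ih =>
    rw [Finset.sum_range_succ, Finset.sum_range_succ]
    exact add_le_add ih (h K)

private lemma sum_nonneg_range {W : ℕ → E} (h : ∀ i, (0:E) ≤ W i) (K : ℕ) :
    (0:E) ≤ ∑ i ∈ Finset.range K, W i := by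
  induction K with
  | zero => simp
  | succ K ih =>
    rw [Finset.sum_range_succ]
    exact add_nonneg ih (h K)

private lemma sum_mono_range {W : ℕ → E} (h : ∀ i, (0:E) ≤ W i) {K M : ℕ} (hKM : K ≤ M) :
    ∑ i ∈ Finset.range K, W i ≤ ∑ i ∈ Finset.range M, W i := by
  induction M, hKM using Nat.le_induction with
  | base => exact le_rfl
  | succ M hKM ih =>
    rw [Finset.sum_range_succ]
    exact le_trans ih (le_add_of_nonneg_right (h M))

private lemma inf_sum_range {W : ℕ → E} {b : E} (hb : (0:E) ≤ b) (hW : ∀ i, (0:E) ≤ W i)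
    (h : ∀ i, W i ⊓ b = 0) (K : ℕ) : (∑ i ∈ Finset.range K, W i) ⊓ b = 0 := by
  induction K with
  | zero => simpa using hb
  | succ K ih =>
    rw [Finset.sum_range_succ]
    refine le_antisymm ?_ (le_inf (add_nonneg (sum_nonneg_range hW K) (hW K)) hb)
    calc ((∑ i ∈ Finset.range K, W i) + W K) ⊓ b
        = b ⊓ ((∑ i ∈ Finset.range K, W i) + W K) := inf_comm _ _
    _ ≤ b ⊓ (∑ i ∈ Finset.range K, W i) + b ⊓ W K :=
        inf_add_le3 hb (sum_nonneg_range hW K) (hW K)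
    _ = 0 := by rw [inf_comm b, ih, inf_comm b, h K, add_zero]

private lemma arch_le (harch : VLArchimedean E) {e a b : E} (he : 0 ≤ e)
    (h : ∀ ε : ℝ, 0 < ε → a ≤ b + ε • e) : a ≤ b := by
  have key : ∀ n : ℕ, n • (a - b) ≤ e := by
    intro n
    rcases Nat.eq_zero_or_pos n with hn | hn
    · simpa [hn] using he
    · have hn' : (0 : ℝ) < n := by exact_mod_cast hn
      have h1 : a ≤ b + ((n : ℝ)⁻¹) • e := h _ (by positivity)
      have h2 : a - b ≤ ((n : ℝ)⁻¹) • e := sub_le_iff_le_add'.2 h1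
      have h3 : (n : ℝ) • (a - b) ≤ (n : ℝ) • (((n : ℝ)⁻¹) • e) :=
        smul_le_smul_of_nonneg_left h2 hn'.le
      rw [smul_smul, mul_inv_cancel₀ hn'.ne', one_smul] at h3
      rwa [Nat.cast_smul_eq_nsmul] at h3
  exact sub_nonpos.1 (harch (a - b) e key)

private lemma key_lemma (harch : VLArchimedean E) (huc : UniformlyComplete E)
    (P : Submodule ℝ E)
    (hPr : ∀ u v : E, u ⊓ v ∈ P → u ∈ P ∨ v ∈ P)
    {f : E} (hf : 0 ≤ f)
    (hgen : ∀ y : E, y ∈ P ↔ ∃ c : ℝ, 0 ≤ c ∧ |y| ≤ c • f)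
    {g z : E} (hg : 0 ≤ g) (hz : 0 ≤ z) (hgP : g ∉ P)
    (hbig : ∀ n : ℕ, 1 ≤ n → (((n : ℝ) • g - z)⁺ ∈ P)) : False := by
  set e : E := f + g + z with hedef
  have he : (0 : E) ≤ e := add_nonneg (add_nonneg hf hg) hz
  have hze : z ≤ e := le_add_of_nonneg_left (add_nonneg hf hg)
  -- Step 1 : for every n ≥ 1 there is d ≥ 0 with g ≤ (1/n) e + d f
  have hδ : ∀ n : ℕ, 1 ≤ n → ∃ d : ℝ, 0 ≤ d ∧ g ≤ ((n : ℝ)⁻¹) • e + d • f := by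
    intro n hn
    have hn' : (0 : ℝ) < n := by exact_mod_cast hn
    obtain ⟨c, hc0, hc⟩ := (hgen _).1 (hbig n hn)
    rw [abs_of_nonneg (posPart_nonneg _)] at hc
    have h1 : (n : ℝ) • g ≤ z + c • f :=
      sub_le_iff_le_add'.1 (le_trans (le_posPart _) hc)
    refine ⟨(n : ℝ)⁻¹ * c, by positivity, ?_⟩
    have h3 : ((n : ℝ)⁻¹) • ((n : ℝ) • g) ≤ ((n : ℝ)⁻¹) • (z + c • f) :=
      smul_le_smul_of_nonneg_left h1 (by positivity)
    rw [smul_smul, inv_mul_cancel₀ hn'.ne', one_smul, smul_add, smul_smul] at h3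
    exact le_trans h3 (add_le_add_left
      (smul_le_smul_of_nonneg_left hze (by positivity)) _)
  -- Claim A : for every m > 0 there is C > 0 such that R c m holds for all c ≥ C
  have hA : ∀ m : ℝ, 0 < m → ∃ C : ℝ, 0 < C ∧ ∀ c : ℝ, C ≤ c →
      (g - c • f)⁺ ⊓ (g - m • e)⁺ = 0 := by
    intro m hm
    obtain ⟨n, hn⟩ := exists_nat_gt (2 / m)
    have hn1 : 1 ≤ n := by
      have h2 : (0 : ℝ) < 2 / m := by positivity
      have : (0 : ℝ) < (n : ℝ) := lt_trans h2 hn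
      exact_mod_cast Nat.one_le_iff_ne_zero.2 (by exact_mod_cast this.ne')
    have hn' : (0 : ℝ) < n := by exact_mod_cast hn1
    have h2nm : (2 : ℝ) < n * m := by rwa [div_lt_iff₀ hm] at hn
    have h2n : 2 * (n : ℝ)⁻¹ < m := by
      have h5 : (n : ℝ)⁻¹ * 2 < (n : ℝ)⁻¹ * ((n : ℝ) * m) :=
        mul_lt_mul_of_pos_left h2nm (inv_pos.2 hn')
      rw [← mul_assoc, inv_mul_cancel₀ hn'.ne', one_mul] at h5
      linarith
    obtain ⟨d, hd0, hdle⟩ := hδ n hn1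
    refine ⟨2 * d + 1, by positivity, fun c hc => ?_⟩
    have hcd : (2 * d) • f ≤ c • f := smul_le_smul_vec (by linarith) hf
    have ha1 : g - c • f ≤ (n : ℝ)⁻¹ • e - d • f := by
      calc g - c • f ≤ ((n : ℝ)⁻¹ • e + d • f) - (2 * d) • f := sub_le_sub hdle hcd
      _ = (n : ℝ)⁻¹ • e - d • f := by module
    have hme : (2 * (n : ℝ)⁻¹) • e ≤ m • e := smul_le_smul_vec h2n.le he
    have ha2 : g - m • e ≤ d • f - (n : ℝ)⁻¹ • e := by
      calc g - m • e ≤ ((n : ℝ)⁻¹ • e + d • f) - (2 * (n : ℝ)⁻¹) • e := sub_le_sub hdle hme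
      _ = d • f - (n : ℝ)⁻¹ • e := by module
    have h6 : (g - c • f)⁺ ≤ ((n : ℝ)⁻¹ • e - d • f)⁺ := posPart_mono ha1
    have h7 : (g - m • e)⁺ ≤ ((n : ℝ)⁻¹ • e - d • f)⁻ := by
      have h8 : (g - m • e)⁺ ≤ (-((n : ℝ)⁻¹ • e - d • f))⁺ := by
        refine posPart_mono ?_
        rwa [neg_sub]
      rwa [posPart_neg] at h8
    exact inf_zero_mono (posPart_nonneg _) (posPart_nonneg _) h6 h7
      (posPart_inf_negPart_eq_zero _)
  -- from R c m we get (g - c f)⁺ ≤ m e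
  have hq_of_R : ∀ c m : ℝ, 0 ≤ c → ((g - c • f)⁺ ⊓ (g - m • e)⁺ = 0) → 0 ≤ m →
      (g - c • f)⁺ ≤ m • e := by
    intro c m hc hR hm
    have hq0 : (0 : E) ≤ (g - c • f)⁺ := posPart_nonneg _
    have hqg : (g - c • f)⁺ ≤ g := by
      calc (g - c • f)⁺ ≤ g⁺ := posPart_mono (sub_le_self g (smul_nonneg hc hf))
      _ = g := posPart_of_nonneg hg
    have h2 : g ≤ (g - m • e)⁺ + m • e := sub_le_iff_le_add.1 (le_posPart _)
    calc (g - c • f)⁺ = (g - c • f)⁺ ⊓ g := (inf_eq_left.2 hqg).symm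
    _ ≤ (g - c • f)⁺ ⊓ ((g - m • e)⁺ + m • e) := inf_le_inf_left _ h2
    _ ≤ (g - c • f)⁺ ⊓ (g - m • e)⁺ + (g - c • f)⁺ ⊓ (m • e) :=
        inf_add_le3 hq0 (posPart_nonneg _) (smul_nonneg hm he)
    _ = (g - c • f)⁺ ⊓ (m • e) := by rw [hR, zero_add]
    _ ≤ m • e := inf_le_right
  -- Step N : for each c ≥ 0 there is m > 0 witnessing non-smallness
  have hN : ∀ c : ℝ, 0 ≤ c → ∃ m : ℝ, 0 < m ∧ (g - c • f)⁺ ⊓ (g - m • e)⁺ ≠ 0 := by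
    intro c hc
    by_contra hcon
    push_neg at hcon
    have hq : ∀ ε : ℝ, 0 < ε → (g - c • f)⁺ ≤ 0 + ε • e := by
      intro ε hε
      rw [zero_add]
      exact hq_of_R c ε hc (hcon ε hε) hε.le
    have h0 : (g - c • f)⁺ ≤ 0 := arch_le harch he hq
    have h00 : g ≤ c • f := by
      have := posPart_eq_zero.1 (le_antisymm h0 (posPart_nonneg _))
      exact sub_nonpos.1 this
    exact hgP ((hgen g).2 ⟨c, hc, by rwa [abs_of_nonneg hg]⟩)
  -- construct the sequences c, m
  obtain ⟨s, hsGood, hsRel⟩ := seq_exists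
    (fun p : ℝ × ℝ => 0 < p.1 ∧ 0 < p.2 ∧ (g - p.1 • f)⁺ ⊓ (g - p.2 • e)⁺ = 0)
    (fun p q => 2 * p.1 ≤ q.1 ∧ q.2 ≤ p.2 / 2 ∧
      (g - (2 * p.1) • f)⁺ ⊓ (g - (4 * q.2) • e)⁺ ≠ 0)
    (by
      obtain ⟨C, hC0, hC⟩ := hA 1 one_pos
      exact ⟨(C, 1), hC0, one_pos, hC C le_rfl⟩)
    (by
      rintro ⟨c, m⟩ ⟨hc, hm, -⟩
      obtain ⟨m', hm'0, hm'N⟩ := hN (2 * c) (by positivity)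
      have hm₁0 : 0 < min (m' / 4) (m / 2) := lt_min (by positivity) (by positivity)
      obtain ⟨C, hC0, hC⟩ := hA _ hm₁0
      refine ⟨(max C (2 * c), min (m' / 4) (m / 2)),
        ⟨lt_of_lt_of_le hC0 (le_max_left _ _), hm₁0, hC _ (le_max_left _ _)⟩,
        le_max_right _ _, min_le_right _ _, ?_⟩
      intro h0
      apply hm'N
      have h41 : 4 * min (m' / 4) (m / 2) ≤ m' := by
        have := min_le_left (m' / 4) (m / 2); linarith
      have hmono : (g - m' • e)⁺ ≤ (g - (4 * min (m' / 4) (m / 2)) • e)⁺ :=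
        posPart_mono (sub_le_sub_left (smul_le_smul_vec h41 he) g)
      exact inf_zero_mono (posPart_nonneg _) (posPart_nonneg _) le_rfl hmono h0)
  set c : ℕ → ℝ := fun k => (s k).1 with hcdef
  set m : ℕ → ℝ := fun k => (s k).2 with hmdef
  have hc0 : ∀ k, 0 < c k := fun k => (hsGood k).1
  have hm0 : ∀ k, 0 < m k := fun k => (hsGood k).2.1
  have hR : ∀ k, (g - c k • f)⁺ ⊓ (g - m k • e)⁺ = 0 := fun k => (hsGood k).2.2
  have hcs : ∀ k, 2 * c k ≤ c (k + 1) := fun k => (hsRel k).1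
  have hms : ∀ k, m (k + 1) ≤ m k / 2 := fun k => (hsRel k).2.1
  have hNot : ∀ k, (g - (2 * c k) • f)⁺ ⊓ (g - (4 * m (k + 1)) • e)⁺ ≠ 0 :=
    fun k => (hsRel k).2.2
  have hcmono : Monotone c :=
    monotone_nat_of_le_succ (fun k => le_trans (by linarith [hc0 k]) (hcs k))
  have hcgrow : ∀ k, 2 ^ k * c 0 ≤ c k := by
    intro k
    induction k with
    | zero => simp
    | succ k ih =>
      have h2 : (2:ℝ) ^ (k+1) * c 0 = 2 * (2 ^ k * c 0) := by ring
      rw [h2]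
      calc 2 * (2 ^ k * c 0) ≤ 2 * c k := by linarith
      _ ≤ c (k+1) := hcs k
  have hmdecay : ∀ k, m k ≤ m 0 * (1 / 2) ^ k := by
    intro k
    induction k with
    | zero => simp
    | succ k ih =>
      have h2 : m (k+1) ≤ m k / 2 := hms k
      have h3 : m 0 * (1/2)^(k+1) = (m 0 * (1/2)^k) / 2 := by ring
      rw [h3]; linarith
  -- the elements p k
  set p : ℕ → E := fun k => ((g - c k • f)⁺ - m (k + 1) • e)⁺ with hpdef
  have hp0 : ∀ k, (0:E) ≤ p k := fun k => posPart_nonneg _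
  have hpq : ∀ k, p k ≤ (g - c k • f)⁺ := by
    intro k
    calc p k ≤ ((g - c k • f)⁺)⁺ :=
      posPart_mono (sub_le_self _ (smul_nonneg (hm0 _).le he))
    _ = (g - c k • f)⁺ := posPart_of_nonneg (posPart_nonneg _)
  have hqg : ∀ k, (g - c k • f)⁺ ≤ g := by
    intro k
    calc (g - c k • f)⁺ ≤ g⁺ := posPart_mono (sub_le_self g (smul_nonneg (hc0 k).le hf))
    _ = g := posPart_of_nonneg hg
  have hpm : ∀ k, p k ≤ m k • e := fun k =>
    le_trans (hpq k) (hq_of_R _ _ (hc0 k).le (hR k) (hm0 k).le)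
  have hplow : ∀ k, g - c k • f - m (k + 1) • e ≤ p k := by
    intro k
    calc g - c k • f - m (k+1) • e ≤ (g - c k • f)⁺ - m (k+1) • e :=
      sub_le_sub_right (le_posPart _) _
    _ ≤ p k := le_posPart _
  have hdis : ∀ k j, k + 1 ≤ j → p k ⊓ p j = 0 := by
    intro k j hkj
    have h1 : p k ≤ (g - m (k+1) • e)⁺ := posPart_mono (sub_le_sub_right (hqg k) _)
    have h2 : p j ≤ (g - c (k+1) • f)⁺ := by
      refine le_trans (hpq j) (posPart_mono (sub_le_sub_left ?_ g))
      exact smul_le_smul_vec (hcmono hkj) hf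
    refine inf_zero_mono (hp0 k) (hp0 j) h1 h2 ?_
    rw [inf_comm]
    exact hR (k+1)
  -- limits of partial sums
  have glim : ∀ W : ℕ → E, (∀ i, (0:E) ≤ W i) → (∀ i, W i ≤ (m 0 * (1/2)^i) • e) →
      ∃ u : E, (0:E) ≤ u ∧ (∀ i, W i ≤ u) ∧
        (∀ ε : ℝ, 0 < ε → ∃ K : ℕ, ∀ K', K ≤ K' →
          u ≤ (∑ i ∈ Finset.range K', W i) + ε • e) := by
    intro W hW0 hWb
    have hm00 : 0 < m 0 := hm0 0
    have hsum_bound : ∀ a b : ℕ, b ≤ a →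
        (∑ i ∈ Finset.range a, W i) - (∑ i ∈ Finset.range b, W i)
          ≤ (m 0 * (1/2)^b * 2) • e := by
      intro a b hba
      have hdiff : (∑ i ∈ Finset.range a, W i) - (∑ i ∈ Finset.range b, W i)
          = ∑ i ∈ Finset.Ico b a, W i := (Finset.sum_Ico_eq_sub W hba).symm
      rw [hdiff, Finset.sum_Ico_eq_sum_range]
      have hb1 : ∀ j, W (b + j) ≤ (m 0 * (1/2)^b * (1/2)^j) • e := by
        intro j
        have h5 := hWb (b + j)
        rwa [pow_add, ← mul_assoc] at h5
      calc ∑ j ∈ Finset.range (a - b), W (b + j)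
          ≤ ∑ j ∈ Finset.range (a - b), (m 0 * (1/2)^b * (1/2)^j) • e :=
            sum_le_sum_range hb1 _
      _ = (∑ j ∈ Finset.range (a - b), m 0 * (1/2)^b * (1/2)^j) • e :=
            (Finset.sum_smul).symm
      _ ≤ (m 0 * (1/2)^b * 2) • e := by
          refine smul_le_smul_vec ?_ he
          rw [← Finset.mul_sum]
          have h6 := sum_geometric_two_le (a - b)
          have hpos : (0:ℝ) ≤ m 0 * (1/2)^b := by positivity
          nlinarith
    have hCau : ∀ ε : ℝ, 0 < ε → ∃ N : ℕ, ∀ a b : ℕ, N ≤ a → N ≤ b →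
        |(∑ i ∈ Finset.range a, W i) - (∑ i ∈ Finset.range b, W i)| ≤ ε • e := by
      intro ε hε
      obtain ⟨N, hN'⟩ := exists_pow_lt_of_lt_one
        (show (0:ℝ) < ε / (2 * m 0) by positivity) (by norm_num : (1:ℝ)/2 < 1)
      refine ⟨N, ?_⟩
      have hkey : ∀ a b : ℕ, b ≤ a → N ≤ b →
          (∑ i ∈ Finset.range a, W i) - (∑ i ∈ Finset.range b, W i) ≤ ε • e := by
        intro a b hba hNb
        refine le_trans (hsum_bound a b hba) (smul_le_smul_vec ?_ he)
        have h1 : ((1:ℝ)/2)^b ≤ (1/2)^N :=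
          pow_le_pow_of_le_one (by norm_num) (by norm_num) hNb
        have h2 : ((1:ℝ)/2)^N < ε / (2 * m 0) := hN'
        have h3 : (0:ℝ) < 2 * m 0 := by positivity
        rw [lt_div_iff₀ h3] at h2
        nlinarith
      intro a b ha hb
      rcases le_total b a with hba | hab
      · have hd : (0:E) ≤ (∑ i ∈ Finset.range a, W i) - (∑ i ∈ Finset.range b, W i) := by
          rw [sub_nonneg]; exact sum_mono_range hW0 hba
        rw [abs_of_nonneg hd]
        exact hkey a b hba hb
      · have hd : (0:E) ≤ (∑ i ∈ Finset.range b, W i) - (∑ i ∈ Finset.range a, W i) := by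
          rw [sub_nonneg]; exact sum_mono_range hW0 hab
        rw [abs_sub_comm, abs_of_nonneg hd]
        exact hkey b a hab ha
    obtain ⟨u, hu⟩ := huc e he (fun K => ∑ i ∈ Finset.range K, W i) hCau
    have hSle : ∀ K, (∑ i ∈ Finset.range K, W i) ≤ u := by
      intro K
      refine arch_le harch he (fun ε hε => ?_)
      obtain ⟨N, hN'⟩ := hu ε hε
      have h1 := hN' (max N K) (le_max_left _ _)
      have h2 : (∑ i ∈ Finset.range (max N K), W i) - u ≤ ε • e :=
        le_trans (le_abs_self _) h1
      calc (∑ i ∈ Finset.range K, W i) ≤ ∑ i ∈ Finset.range (max N K), W i :=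
        sum_mono_range hW0 (le_max_right _ _)
      _ ≤ u + ε • e := by
          have h3 := sub_le_iff_le_add.1 h2
          rwa [add_comm] at h3
    refine ⟨u, ?_, ?_, ?_⟩
    · have h4 := hSle 0; simpa using h4
    · intro i
      refine le_trans ?_ (hSle (i+1))
      rw [Finset.sum_range_succ]
      exact le_add_of_nonneg_left (sum_nonneg_range hW0 i)
    · intro ε hε
      obtain ⟨N, hN'⟩ := hu ε hε
      refine ⟨N, fun K' hK' => ?_⟩
      have h1 := hN' K' hK'
      have h2 : u - (∑ i ∈ Finset.range K', W i) ≤ ε • e := by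
        have h3 := neg_le_abs ((∑ i ∈ Finset.range K', W i) - u)
        rw [neg_sub] at h3
        exact le_trans h3 h1
      exact sub_le_iff_le_add'.1 h2
  have hWb : ∀ (r : ℕ → ℕ), (∀ i, i ≤ r i) → ∀ i, p (r i) ≤ (m 0 * (1/2)^i) • e := by
    intro r hr i
    refine le_trans (hpm (r i)) (smul_le_smul_vec ?_ he)
    calc m (r i) ≤ m 0 * (1/2)^(r i) := hmdecay _
    _ ≤ m 0 * (1/2)^i := by
        have h1 := pow_le_pow_of_le_one (by norm_num : (0:ℝ) ≤ 1/2) (by norm_num) (hr i)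
        nlinarith [hm0 0]
  obtain ⟨u, hu0, hpu, huap⟩ := glim (fun i => p (2*i+1)) (fun i => hp0 _)
    (hWb (fun i => 2*i+1) (fun i => by show i ≤ 2*i+1; omega))
  obtain ⟨v, hv0, hpv, hvap⟩ := glim (fun i => p (2*i)) (fun i => hp0 _)
    (hWb (fun i => 2*i) (fun i => by show i ≤ 2*i; omega))
  have hUV : ∀ K, (∑ i ∈ Finset.range K, p (2*i+1)) ⊓ (∑ i ∈ Finset.range K, p (2*i)) = 0 := by
    intro K
    refine inf_sum_range (sum_nonneg_range (fun i => hp0 _) K) (fun i => hp0 _) ?_ K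
    intro i
    rw [inf_comm]
    refine inf_sum_range (hp0 _) (fun j => hp0 _) ?_ K
    intro j
    rcases le_or_gt (2*j) (2*i) with hji | hij
    · exact hdis (2*j) (2*i+1) (by omega)
    · rw [inf_comm]; exact hdis (2*i+1) (2*j) (by omega)
  have huv : u ⊓ v = 0 := by
    refine le_antisymm ?_ (le_inf hu0 hv0)
    refine arch_le harch he (fun ε hε => ?_)
    obtain ⟨K1, hK1⟩ := huap (ε/2) (by positivity)
    obtain ⟨K2, hK2⟩ := hvap (ε/2) (by positivity)
    have h1 := hK1 (max K1 K2) (le_max_left _ _)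
    have h2 := hK2 (max K1 K2) (le_max_right _ _)
    calc u ⊓ v ≤ ((∑ i ∈ Finset.range (max K1 K2), p (2*i+1)) + (ε/2) • e)
        ⊓ ((∑ i ∈ Finset.range (max K1 K2), p (2*i)) + (ε/2) • e) := inf_le_inf h1 h2
    _ = ((∑ i ∈ Finset.range (max K1 K2), p (2*i+1))
          ⊓ (∑ i ∈ Finset.range (max K1 K2), p (2*i))) + (ε/2) • e := (inf_add _ _ _).symm
    _ = 0 + (ε/2) • e := by rw [hUV]
    _ ≤ 0 + ε • e := by
        rw [zero_add, zero_add]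
        exact smul_le_smul_vec (by linarith) he
  have hdisj := hPr u v (by rw [huv]; exact P.zero_mem)
  have final : ∀ (idx : ℕ → ℕ) (sP : E), (∀ i, i ≤ idx i) → (0:E) ≤ sP → sP ∈ P →
      (∀ i, p (idx i) ≤ sP) → False := by
    intro idx sP hidx hsP0 hsPP hple
    obtain ⟨cc, hcc0, hccle⟩ := (hgen sP).1 hsPP
    rw [abs_of_nonneg hsP0] at hccle
    obtain ⟨i, hi⟩ := pow_unbounded_of_one_lt ((2 * cc) / c 0) one_lt_two
    have h2cc : 2 * cc ≤ c (idx i) := by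
      rw [div_lt_iff₀ (hc0 0)] at hi
      calc 2 * cc ≤ 2 ^ i * c 0 := hi.le
      _ ≤ c i := hcgrow i
      _ ≤ c (idx i) := hcmono (hidx i)
    set k := idx i with hkdef
    set A : E := g - (2 * c k) • f with hAdef
    set B : E := g - (4 * m (k+1)) • e with hBdef
    have ht : A⁺ ⊓ B⁺ ≠ 0 := hNot k
    have ht0 : (0:E) ≤ A⁺ ⊓ B⁺ := le_inf (posPart_nonneg _) (posPart_nonneg _)
    have hpcc : p k ≤ cc • f := le_trans (hple i) hccle
    have hXzero : (p k - cc • f)⁺ = 0 := posPart_eq_zero.2 (sub_nonpos.2 hpcc)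
    have hr1 : ((3/4 : ℝ) • A⁻) ⊓ (A⁺ ⊓ B⁺) = 0 := by
      have hmA : (3/4 : ℝ) • A⁻ ≤ A⁻ := by
        calc (3/4 : ℝ) • A⁻ ≤ (1:ℝ) • A⁻ := smul_le_smul_vec (by norm_num) (negPart_nonneg _)
        _ = A⁻ := one_smul _ _
      have hz1 : A⁻ ⊓ A⁺ = 0 := by rw [inf_comm]; exact posPart_inf_negPart_eq_zero A
      exact inf_zero_mono (smul_nonneg (by norm_num) (negPart_nonneg _)) ht0 hmA inf_le_left hz1
    have hr2 : ((1/4 : ℝ) • B⁻) ⊓ (A⁺ ⊓ B⁺) = 0 := by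
      have hmB : (1/4 : ℝ) • B⁻ ≤ B⁻ := by
        calc (1/4 : ℝ) • B⁻ ≤ (1:ℝ) • B⁻ := smul_le_smul_vec (by norm_num) (negPart_nonneg _)
        _ = B⁻ := one_smul _ _
      have hz2 : B⁻ ⊓ B⁺ = 0 := by rw [inf_comm]; exact posPart_inf_negPart_eq_zero B
      exact inf_zero_mono (smul_nonneg (by norm_num) (negPart_nonneg _)) ht0 hmB inf_le_right hz2
    have hrsum : (A⁺ ⊓ B⁺) ⊓ ((3/4:ℝ) • A⁻ + (1/4:ℝ) • B⁻) = 0 := by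
      have hle := inf_add_le3 ht0
        (smul_nonneg (by norm_num : (0:ℝ) ≤ 3/4) (negPart_nonneg A))
        (smul_nonneg (by norm_num : (0:ℝ) ≤ 1/4) (negPart_nonneg B))
      rw [inf_comm] at hr1 hr2
      rw [hr1, hr2, add_zero] at hle
      refine le_antisymm hle (le_inf ht0 (add_nonneg
        (smul_nonneg (by norm_num) (negPart_nonneg _))
        (smul_nonneg (by norm_num) (negPart_nonneg _))))
    have hmain : (1/4 : ℝ) • B ≤ (p k - cc • f) + (3/4:ℝ) • A⁻ := by
      have e1 : g - c k • f - m (k+1) • e - (c k / 2) • f ≤ p k - cc • f :=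
        sub_le_sub (hplow k) (smul_le_smul_vec (by linarith) hf)
      have e2 : (3/4:ℝ) • ((2 * c k) • f - g) ≤ (3/4:ℝ) • A⁻ := by
        refine smul_le_smul_of_nonneg_left ?_ (by norm_num)
        have h5 := neg_le_negPart A
        rwa [hAdef, neg_sub] at h5
      calc (1/4:ℝ) • B
          = (g - c k • f - m (k+1) • e - (c k / 2) • f) + (3/4:ℝ) • ((2 * c k) • f - g) := by
            rw [hBdef]; module
      _ ≤ (p k - cc • f) + (3/4:ℝ) • A⁻ := add_le_add e1 e2
    have hq4 : (1/4:ℝ) • (A⁺ ⊓ B⁺) ≤ 0 := by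
      have hBd : B⁺ = B + B⁻ := eq_add_of_sub_eq (posPart_sub_negPart B)
      have s3 : (1/4:ℝ) • (A⁺ ⊓ B⁺) ≤ (p k - cc • f) + ((3/4:ℝ) • A⁻ + (1/4:ℝ) • B⁻) := by
        calc (1/4:ℝ) • (A⁺ ⊓ B⁺) ≤ (1/4:ℝ) • B⁺ :=
          smul_le_smul_of_nonneg_left inf_le_right (by norm_num)
        _ = (1/4:ℝ) • B + (1/4:ℝ) • B⁻ := by rw [hBd, smul_add]
        _ ≤ ((p k - cc • f) + (3/4:ℝ) • A⁻) + (1/4:ℝ) • B⁻ := add_le_add_left hmain _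
        _ = (p k - cc • f) + ((3/4:ℝ) • A⁻ + (1/4:ℝ) • B⁻) := add_assoc _ _ _
      have s4 : (1/4:ℝ) • (A⁺ ⊓ B⁺) ≤ A⁺ ⊓ B⁺ := by
        calc (1/4:ℝ) • (A⁺ ⊓ B⁺) ≤ (1:ℝ) • (A⁺ ⊓ B⁺) := smul_le_smul_vec (by norm_num) ht0
        _ = A⁺ ⊓ B⁺ := one_smul _ _
      have h7 := inf_add_le3 ht0 (posPart_nonneg (p k - cc • f))
        (add_nonneg (smul_nonneg (by norm_num : (0:ℝ) ≤ 3/4) (negPart_nonneg A))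
          (smul_nonneg (by norm_num : (0:ℝ) ≤ 1/4) (negPart_nonneg B)))
      have hX0 : (A⁺ ⊓ B⁺) ⊓ (p k - cc • f)⁺ ≤ 0 := by rw [hXzero]; exact inf_le_right
      calc (1/4:ℝ) • (A⁺ ⊓ B⁺)
          ≤ (A⁺ ⊓ B⁺) ⊓ ((p k - cc • f)⁺ + ((3/4:ℝ) • A⁻ + (1/4:ℝ) • B⁻)) :=
            le_inf s4 (le_trans s3 (add_le_add_left (le_posPart _) _))
      _ ≤ (A⁺ ⊓ B⁺) ⊓ (p k - cc • f)⁺ + (A⁺ ⊓ B⁺) ⊓ ((3/4:ℝ) • A⁻ + (1/4:ℝ) • B⁻) := h7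
      _ ≤ 0 + 0 := add_le_add hX0 (le_of_eq hrsum)
      _ = 0 := add_zero 0
    have ht00 : A⁺ ⊓ B⁺ ≤ 0 := by
      have h9 := smul_le_smul_of_nonneg_left hq4 (by norm_num : (0:ℝ) ≤ 4)
      rwa [smul_smul, smul_zero, show (4:ℝ) * (1/4) = 1 by norm_num, one_smul] at h9
    exact ht (le_antisymm ht00 ht0)
  rcases hdisj with hu' | hv'
  · exact final (fun i => 2*i+1) u (fun i => by show i ≤ 2*i+1; omega) hu0 hu' hpu
  · exact final (fun i => 2*i) v (fun i => by show i ≤ 2*i; omega) hv0 hv' hpv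

end Statement6Helpers

theorem statement6 (E : Type*) [Lattice E] [AddCommGroup E] [Module ℝ E]
    [CovariantClass E E (· + ·) (· ≤ ·)] [PosSMulMono ℝ E]
    (harch : VLArchimedean E) (huc : UniformlyComplete E)
    (h : ∃ P : Submodule ℝ E, IsPrimeIdeal P ∧ IsPrincipalIdeal P) :
    HasStrongUnit E := by
  obtain ⟨P, hP, hPrin⟩ := h
  obtain ⟨x, hx0, hgen⟩ := hPrin
  obtain ⟨hId, hne, hPr⟩ := hP
  obtain ⟨y0, hy0⟩ : ∃ y : E, y ∉ P := by
    by_contra hco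
    push_neg at hco
    exact hne (Submodule.eq_top_iff'.2 hco)
  have hw0 : (0:E) ≤ |y0| := abs_nonneg y0
  have hwP : |y0| ∉ P := fun hw => hy0 (hId y0 |y0| (by rw [abs_abs]) hw)
  refine ⟨x + |y0|, add_nonneg hx0 hw0, fun y => ?_⟩
  have hz0 : (0:E) ≤ |y| := abs_nonneg y
  by_cases hcase : ∃ n : ℕ, (|y| - (n:ℝ) • |y0|)⁺ ∈ P
  · obtain ⟨n, hn⟩ := hcase
    obtain ⟨c, hc0, hcle⟩ := (hgen _).1 hn
    rw [abs_of_nonneg (posPart_nonneg _)] at hcle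
    refine ⟨(n:ℝ) + c + 1, by positivity, ?_⟩
    have h1 : |y| ≤ (n:ℝ) • |y0| + c • x :=
      sub_le_iff_le_add'.1 (le_trans (le_posPart _) hcle)
    calc |y| ≤ (n:ℝ) • |y0| + c • x := h1
    _ ≤ ((n:ℝ) + c + 1) • |y0| + ((n:ℝ) + c + 1) • x :=
        add_le_add (smul_le_smul_vec (by linarith) hw0) (smul_le_smul_vec (by linarith) hx0)
    _ = ((n:ℝ) + c + 1) • (x + |y0|) := by module
  · push_neg at hcase
    exfalso
    apply key_lemma harch huc P hPr hx0 hgen hw0 hz0 hwP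
    intro n hn
    have hinf : (|y| - (n:ℝ) • |y0|)⁺ ⊓ ((n:ℝ) • |y0| - |y|)⁺ = 0 := by
      rw [← neg_sub (|y|) ((n:ℝ) • |y0|), posPart_neg]
      exact posPart_inf_negPart_eq_zero _
    rcases hPr _ _ (by rw [hinf]; exact P.zero_mem) with h1 | h1
    · exact absurd h1 (hcase n)
    · exact h1
end

section
/- Let K be a compact Hausdorff space and let x ∈ K. The maximal ideal M_x = {f ∈ C(K) : f(x) = 0} of the vector lattice C(K) of continuous real-valued functions on K is a principal ideal if and only if x is an isolated point of K. -/
/-!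
If `g ≥ 0` generates `M_x`, then `√g ∈ M_x` gives `√g ≤ c g`, so `g ≥ 1 / c²` wherever `g ≠ 0`;
complete regularity forces `g⁻¹ {0} = {x}`, which is therefore open. Conversely, if `x` is
isolated, the indicator of `{x}ᶜ` is continuous and generates `M_x`, since every continuous
function on a compact space is bounded.
-/

open Set

theorem Real.one_le_sq_mul_of_sqrt_le_mul {t c : ℝ} (ht : 0 < t) (h : √t ≤ c * t) :
    1 ≤ c ^ 2 * t := by
  have hs : 0 < √t := Real.sqrt_pos.mpr ht
  have hsq : √t ^ 2 = t := Real.sq_sqrt ht.le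
  have hcs : 1 ≤ c * √t := by nlinarith
  nlinarith

section

variable {X : Type*} [TopologicalSpace X]

theorem isOpen_setOf_eq_zero_of_sqrt_le_mul {g : X → ℝ} (hg : Continuous g) (hg₀ : 0 ≤ g)
    {c : ℝ} (h : ∀ y, √(g y) ≤ c * g y) : IsOpen {y | g y = 0} := by
  have hzero : {y | g y = 0} = {y | c ^ 2 * g y < 1} := by
    ext y
    simp only [mem_ofPred_eq]
    refine ⟨fun hy ↦ by simp [hy], fun hy ↦ ?_⟩
    by_contra hne
    have := Real.one_le_sq_mul_of_sqrt_le_mul ((hg₀ y).lt_of_ne' hne) (h y)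
    linarith
  rw [hzero]
  exact isOpen_lt (continuous_const.mul hg) continuous_const

theorem eq_of_apply_eq_zero_of_forall_abs_le_smul [CompletelyRegularSpace X] [T1Space X]
    {x y : X} {g : C(X, ℝ)} (hg : ∀ f : C(X, ℝ), f x = 0 → ∃ c : ℝ, |f| ≤ c • g)
    (hy : g y = 0) : y = x := by
  by_contra hne
  obtain ⟨f, hf, hfx, hfy⟩ :=
    CompletelyRegularSpace.completely_regular x {y} isClosed_singleton (Ne.symm hne)
  obtain ⟨c, hc⟩ := hg ⟨fun z ↦ f z, by fun_prop⟩ (by simp [hfx])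
  have := hc y
  norm_num [hy, hfy rfl] at this

theorem isOpen_singleton_of_forall_apply_eq_zero_iff [CompletelyRegularSpace X] [T1Space X]
    {x : X} {g : C(X, ℝ)} (hg₀ : 0 ≤ g)
    (hg : ∀ f : C(X, ℝ), f x = 0 ↔ ∃ c : ℝ, 0 ≤ c ∧ |f| ≤ c • g) : IsOpen ({x} : Set X) := by
  have hgx : g x = 0 := (hg g).mpr ⟨1, zero_le_one, by rw [one_smul, abs_of_nonneg hg₀]⟩
  obtain ⟨c, -, hc⟩ := (hg ⟨fun y ↦ √(g y), by fun_prop⟩).mp (by simp [hgx])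
  have hsqrt : ∀ y, √(g y) ≤ c * g y := fun y ↦ by
    simpa [abs_of_nonneg (Real.sqrt_nonneg _)] using hc y
  have hzero : ({x} : Set X) = {y | g y = 0} := by
    ext y
    refine ⟨fun hy ↦ by rw [mem_singleton_iff.mp hy]; exact hgx, fun hy ↦ ?_⟩
    exact eq_of_apply_eq_zero_of_forall_abs_le_smul
      (fun f hf ↦ ((hg f).mp hf).imp fun _ ↦ And.right) hy
  rw [hzero]
  exact isOpen_setOf_eq_zero_of_sqrt_le_mul g.continuous hg₀ hsqrt

end

theorem IsClopen.exists_abs_le_smul_indicator_iff {X : Type*} [TopologicalSpace X]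
    [CompactSpace X] {s : Set X} (hs : IsClopen s) (f : C(X, ℝ)) :
    (∀ y ∉ s, f y = 0) ↔ ∃ c : ℝ, 0 ≤ c ∧
      |f| ≤ c • (⟨s.indicator 1, hs.continuous_indicator continuous_const⟩ : C(X, ℝ)) := by
  constructor
  · refine fun hf ↦ ⟨‖f‖, norm_nonneg f, fun y ↦ ?_⟩
    by_cases hy : y ∈ s
    · simpa [hy] using f.norm_coe_le_norm y
    · simp [hy, hf y hy]
  · rintro ⟨c, -, hc⟩ y hy
    simpa [hy] using hc y

theorem statement7 (K : Type*) [TopologicalSpace K] [CompactSpace K] [T2Space K]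
    (x : K) :
    (∃ g : C(K, ℝ), 0 ≤ g ∧
        ∀ f : C(K, ℝ), f x = 0 ↔ ∃ c : ℝ, 0 ≤ c ∧ |f| ≤ c • g) ↔
      IsOpen ({x} : Set K) := by
  refine ⟨fun ⟨g, hg₀, hg⟩ ↦ isOpen_singleton_of_forall_apply_eq_zero_iff hg₀ hg, fun hx ↦ ?_⟩
  have hs : IsClopen ({x}ᶜ : Set K) := IsClopen.compl ⟨isClosed_singleton, hx⟩
  refine ⟨⟨({x}ᶜ : Set K).indicator 1, hs.continuous_indicator continuous_const⟩,
    fun y ↦ ?_, fun f ↦ ?_⟩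
  · by_cases hy : y = x <;> simp [hy]
  · simpa using hs.exists_abs_le_smul_indicator_iff f
end
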